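/- arXiv:1206.5178 — 12 statements merged into one kernel-verified Lean document; each statement's English description precedes it below -/
import Mathlib

section
/- Let Λ ⊆ ℤ² be a rank-2 sublattice and v ∈ Λ ∩ ℕ², v ≠ 0. If v is not visible in Λ (i.e., there exists an integer d ≥ 2 with (1/d)·v ∈ Λ), then for every lattice path p from 0 to v there exist two distinct path nodes, not equal to the pair (0, v), whose difference lies in Λ. In fact, there is an index i such that p_{i + ‖v‖₁/d} − p_i = (1/d)·v. -/
/-- Discrete intermediate value theorem (one direction). -/
private lemma ivt_aux (f : ℕ → ℤ) (hstep : ∀ n, f (n + 1) ≤ f n + 1) (c : ℤ) (u : ℕ)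
    (hu : f u ≤ c) (v : ℕ) (huv : u ≤ v) : c ≤ f v → ∃ n, u ≤ n ∧ n ≤ v ∧ f n = c := by
  induction v, huv using Nat.le_induction with
  | base => intro h; exact ⟨u, le_refl u, le_refl u, le_antisymm hu h⟩
  | succ v hv ih =>
    intro h
    by_cases hc : c ≤ f v
    · obtain ⟨n, h1, h2, h3⟩ := ih hc
      exact ⟨n, h1, h2.trans (Nat.le_succ v), h3⟩
    · push_neg at hc
      refine ⟨v + 1, hv.trans (Nat.le_succ v), le_refl _, le_antisymm ?_ h⟩
      have := hstep v
      omega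

/-- If `v = d • w` with `d ≥ 2` and `w ∈ Λ` (so `v` is not visible in `Λ`), then every
lattice path from `0` to `v` has a pair of distinct nodes, other than the pair of
endpoints, whose difference lies in `Λ`; indeed, there is an index `i` such that
`p (i + ‖v‖₁ / d) - p i = (1/d) • v = w`. -/
theorem latticePath_selfCongruence_of_not_visible (Λ : AddSubgroup (ℤ × ℤ))
    (hΛ : Λ.index ≠ 0) (v : ℤ × ℤ) (hvΛ : v ∈ Λ) (hv1 : 0 ≤ v.1) (hv2 : 0 ≤ v.2)
    (hv0 : v ≠ 0) (d : ℕ) (hd : 2 ≤ d) (w : ℤ × ℤ) (hwΛ : w ∈ Λ)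
    (hw : (d : ℤ) • w = v)
    (p : ℕ → ℤ × ℤ) (k : ℕ) (hp0 : p 0 = 0) (hpk : p k = v)
    (hstep : ∀ i < k, p (i + 1) - p i = ((1 : ℤ), (0 : ℤ)) ∨
      p (i + 1) - p i = ((0 : ℤ), (1 : ℤ))) :
    (∃ i j, i < j ∧ j ≤ k ∧ ¬(i = 0 ∧ j = k) ∧ p j - p i ∈ Λ) ∧
      (∃ i, i + k / d ≤ k ∧ p (i + k / d) - p i = w) := by
  -- coordinates of w
  have hw1 : (d : ℤ) * w.1 = v.1 := by
    have := congrArg Prod.fst hw; simpa using this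
  have hw2 : (d : ℤ) * w.2 = v.2 := by
    have := congrArg Prod.snd hw; simpa using this
  -- coordinate sums along the path
  have hsum : ∀ i ≤ k, (p i).1 + (p i).2 = (i : ℤ) := by
    intro i
    induction i with
    | zero => intro _; simp [hp0]
    | succ i ih =>
      intro hik
      have hik' : i < k := hik
      have ihs := ih hik'.le
      rcases hstep i hik' with h | h <;>
      · have h1 := congrArg Prod.fst h
        have h2 := congrArg Prod.snd h
        simp [Prod.fst_sub, Prod.snd_sub] at h1 h2
        push_cast
        omega
  have hkv : (k : ℤ) = v.1 + v.2 := by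
    have := hsum k le_rfl
    rw [hpk] at this
    omega
  -- m = k / d
  have hMnn : (0 : ℤ) ≤ w.1 + w.2 := by nlinarith
  set m : ℕ := (w.1 + w.2).toNat with hmdef
  have hmZ : (m : ℤ) = w.1 + w.2 := Int.toNat_of_nonneg hMnn
  have hkdm : k = d * m := by
    have : (k : ℤ) = (d : ℤ) * m := by rw [hmZ, mul_add, hw1, hw2, hkv]
    exact_mod_cast this
  have hk1 : 1 ≤ k := by
    have hvne : v.1 ≠ 0 ∨ v.2 ≠ 0 := by
      by_contra h
      push_neg at h
      exact hv0 (Prod.ext h.1 h.2)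
    omega
  have hm1 : 1 ≤ m := by
    rcases Nat.eq_zero_or_pos m with h | h
    · rw [h, Nat.mul_zero] at hkdm; omega
    · exact h
  -- extended path
  set q : ℕ → ℤ × ℤ := fun i => p (min i k) with hqdef
  have hq01 : ∀ i, (q (i + 1)).1 - (q i).1 = 0 ∨ (q (i + 1)).1 - (q i).1 = 1 := by
    intro i
    by_cases hik : i < k
    · have h1 : min (i + 1) k = i + 1 := by omega
      have h2 : min i k = i := by omega
      rcases hstep i hik with h | h <;>
      · have := congrArg Prod.fst h
        simp only [Prod.fst_sub] at this
        simp [hqdef, h1, h2, this]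
    · have h1 : min (i + 1) k = k := by omega
      have h2 : min i k = k := by omega
      simp [hqdef, h1, h2]
  set f : ℕ → ℤ := fun i => (q (i + m)).1 - (q i).1 with hfdef
  have hfstep1 : ∀ n, f (n + 1) ≤ f n + 1 := by
    intro n
    have h1 := hq01 (n + m)
    have h2 := hq01 n
    have : n + 1 + m = n + m + 1 := by omega
    simp only [hfdef, this]
    omega
  have hfstep2 : ∀ n, f n ≤ f (n + 1) + 1 := by
    intro n
    have h1 := hq01 (n + m)
    have h2 := hq01 n
    have : n + 1 + m = n + m + 1 := by omega
    simp only [hfdef, this]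
    omega
  -- telescoping sum
  have htel : ∑ j ∈ Finset.range d, f (j * m) = v.1 := by
    have step : ∀ j ∈ Finset.range d, f (j * m) =
        (fun j => (q (j * m)).1) (j + 1) - (fun j => (q (j * m)).1) j := by
      intro j _
      simp only [hfdef]
      have : (j + 1) * m = j * m + m := by ring
      rw [this]
    rw [Finset.sum_congr rfl step, Finset.sum_range_sub (fun j => (q (j * m)).1)]
    have hqk : q (d * m) = v := by
      have : min (d * m) k = k := by omega
      simp [hqdef, this, hpk]
    have hq0 : q 0 = 0 := by
      have : min 0 k = 0 := by omega
      simp [hqdef, this, hp0]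
    rw [Nat.zero_mul, hqk, hq0]
    simp
  -- existence of indices below/above average
  have hconst : ∑ _j ∈ Finset.range d, w.1 = (d : ℤ) * w.1 := by
    rw [Finset.sum_const, Finset.card_range]; ring
  have hj1 : ∃ j ∈ Finset.range d, f (j * m) ≤ w.1 := by
    by_contra h
    push_neg at h
    have : ∑ j ∈ Finset.range d, w.1 < ∑ j ∈ Finset.range d, f (j * m) := by
      apply Finset.sum_lt_sum_of_nonempty
      · exact ⟨0, Finset.mem_range.2 (by omega)⟩
      · exact h
    rw [htel, hconst, ← hw1] at this
    omega
  have hj2 : ∃ j ∈ Finset.range d, w.1 ≤ f (j * m) := by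
    by_contra h
    push_neg at h
    have : ∑ j ∈ Finset.range d, f (j * m) < ∑ j ∈ Finset.range d, w.1 := by
      apply Finset.sum_lt_sum_of_nonempty
      · exact ⟨0, Finset.mem_range.2 (by omega)⟩
      · exact h
    rw [htel, hconst, ← hw1] at this
    omega
  obtain ⟨j1, hj1r, hj1v⟩ := hj1
  obtain ⟨j2, hj2r, hj2v⟩ := hj2
  rw [Finset.mem_range] at hj1r hj2r
  -- apply discrete IVT
  have hivt : ∃ n, n + m ≤ k ∧ f n = w.1 := by
    rcases le_total (j1 * m) (j2 * m) with hle | hle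
    · obtain ⟨n, hn1, hn2, hn3⟩ := ivt_aux f hfstep1 w.1 (j1 * m) hj1v (j2 * m) hle hj2v
      refine ⟨n, ?_, hn3⟩
      have : j2 * m ≤ (d - 1) * m := Nat.mul_le_mul_right m (by omega)
      have : (d - 1) * m + m = d * m := by
        have : 1 ≤ d := by omega
        calc (d - 1) * m + m = (d - 1 + 1) * m := by ring
          _ = d * m := by rw [Nat.sub_add_cancel ‹1 ≤ d›]
      omega
    · obtain ⟨n, hn1, hn2, hn3⟩ := ivt_aux (fun i => -f i)
        (fun n => by have := hfstep2 n; simp; omega) (-w.1) (j2 * m)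
        (by simpa using hj2v) (j1 * m) hle (by simpa using hj1v)
      refine ⟨n, ?_, by omega⟩
      have : j1 * m ≤ (d - 1) * m := Nat.mul_le_mul_right m (by omega)
      have : (d - 1) * m + m = d * m := by
        have h1 : 1 ≤ d := by omega
        calc (d - 1) * m + m = (d - 1 + 1) * m := by ring
          _ = d * m := by rw [Nat.sub_add_cancel h1]
      omega
  obtain ⟨n, hnm, hnf⟩ := hivt
  -- translate back to p
  have hmin1 : min (n + m) k = n + m := by omega
  have hmin2 : min n k = n := by omega
  have hf1 : (p (n + m)).1 - (p n).1 = w.1 := by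
    have := hnf
    simp only [hfdef, hqdef, hmin1, hmin2] at this
    exact this
  have hs1 := hsum (n + m) hnm
  have hs2 := hsum n (by omega)
  have hf2 : (p (n + m)).2 - (p n).2 = w.2 := by
    have hmz : (m : ℤ) = w.1 + w.2 := hmZ
    push_cast at hs1 hs2
    omega
  have hpw : p (n + m) - p n = w := by
    apply Prod.ext
    · simpa using hf1
    · simpa using hf2
  have hkd : k / d = m := by
    rw [hkdm, Nat.mul_div_cancel_left m (by omega : 0 < d)]
  have h2m : 2 * m ≤ k := by
    calc 2 * m ≤ d * m := Nat.mul_le_mul_right m hd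
      _ = k := hkdm.symm
  constructor
  · refine ⟨n, n + m, by omega, hnm, ?_, by rw [hpw]; exact hwΛ⟩
    rintro ⟨h0, hke⟩
    omega
  · exact ⟨n, by rw [hkd]; omega, by rw [hkd]; exact hpw⟩
end

section
/- Let Λ ⊆ ℤ² be a rank-2 sublattice and v ∈ Λ ∩ ℕ² with v visible in Λ and ‖v‖₁ ≤ vol(Λ). Then there exists a lattice path from 0 to v such that no difference between two distinct path nodes, other than v − 0, lies in Λ. -/
/-!
Let `k = ‖v‖₁` and take the staircase path `pᵢ = (⌊i v₁ / k⌋, i - ⌊i v₁ / k⌋)`, `0 ≤ i ≤ k`.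
For `i < j`, the cross product `det(pⱼ - pᵢ, v)` is a difference of two remainders modulo `k`,
so its absolute value is `< k ≤ vol(Λ)`. On the other hand `vol(Λ)` divides `det(d, v)` for every
`d ∈ Λ`, since the lattice spanned by `d` and `v` has index `|det(d, v)|`. Hence a difference
`pⱼ - pᵢ ∈ Λ` is parallel to `v`; being a nonzero multiple of the primitive vector of `v` of
`ℓ¹`-length at most `‖v‖₁`, it equals `v` because `v` is visible in `Λ`.
-/

/-- A nonzero point `v` of a rank-2 sublattice `Λ ⊆ ℤ²` is visible in `Λ` if no proper
fraction `(1/d) • v` with `d ≥ 2` lies in `Λ`. -/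
def IsVisibleIn (Λ : AddSubgroup (ℤ × ℤ)) (v : ℤ × ℤ) : Prop :=
  ∀ d : ℕ, 2 ≤ d → ∀ w ∈ Λ, (d : ℤ) • w ≠ v

def cross (u v : ℤ × ℤ) : ℤ := u.1 * v.2 - u.2 * v.1

theorem linearIndependent_pair_of_cross_ne_zero {u v : ℤ × ℤ} (h : cross u v ≠ 0) :
    LinearIndependent ℤ ![u, v] := by
  rw [LinearIndependent.pair_iff]
  intro s t hst
  have h1 : s * u.1 + t * v.1 = 0 := congrArg Prod.fst hst
  have h2 : s * u.2 + t * v.2 = 0 := congrArg Prod.snd hst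
  have hs : s * cross u v = 0 := by unfold cross; linear_combination v.2 * h1 - v.1 * h2
  have ht : t * cross u v = 0 := by unfold cross; linear_combination u.1 * h2 - u.2 * h1
  exact ⟨(mul_eq_zero.mp hs).resolve_right h, (mul_eq_zero.mp ht).resolve_right h⟩

theorem index_span_pair_eq_natAbs_cross {u v : ℤ × ℤ} (h : cross u v ≠ 0) :
    (Submodule.span ℤ (Set.range ![u, v])).toAddSubgroup.index = (cross u v).natAbs := by
  set b := Module.Basis.span (linearIndependent_pair_of_cross_ne_zero h)
  rw [AddSubgroup.index_eq_natAbs_det (Module.Basis.finTwoProd ℤ) _ b]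
  have hb (i) : ((b i : _) : ℤ × ℤ) = ![u, v] i :=
    congrArg Subtype.val (Module.Basis.span_apply _ i)
  simp [Module.Basis.det_apply, Module.Basis.toMatrix_apply, Matrix.det_fin_two, cross, hb,
    mul_comm]

theorem AddSubgroup.index_dvd_cross (Λ : AddSubgroup (ℤ × ℤ)) {u v : ℤ × ℤ} (hu : u ∈ Λ)
    (hv : v ∈ Λ) : (Λ.index : ℤ) ∣ cross u v := by
  by_cases h : cross u v = 0
  · simp [h]
  have hle : (Submodule.span ℤ (Set.range ![u, v])).toAddSubgroup ≤ Λ :=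
    Submodule.span_le (p := Λ.toIntSubmodule).mpr <| Set.range_subset_iff.mpr <| by
      intro i; fin_cases i <;> assumption
  have := AddSubgroup.index_dvd_of_le hle
  rw [index_span_pair_eq_natAbs_cross h] at this
  exact Int.natCast_dvd.mpr this

theorem exists_smul_eq_smul_of_cross_eq_zero {d v : ℤ × ℤ} (hv : v ≠ 0) (h : cross d v = 0) :
    ∃ (w : ℤ × ℤ) (g : ℕ) (t : ℤ), (g : ℤ) • w = v ∧ t • w = d := by
  set g := Int.gcd v.1 v.2
  have hg : 0 < g := Int.gcd_pos_iff.mpr (by contrapose! hv; exact Prod.ext hv.1 hv.2)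
  set w : ℤ × ℤ := (v.1 / g, v.2 / g)
  have hgw : (g : ℤ) • w = v := Prod.ext (Int.mul_ediv_cancel' (Int.gcd_dvd_left _ _))
    (Int.mul_ediv_cancel' (Int.gcd_dvd_right _ _))
  have hbez : w.1 * Int.gcdA w.1 w.2 + w.2 * Int.gcdB w.1 w.2 = 1 := by
    rw [← Int.gcd_eq_gcd_ab, Int.gcd_div_gcd_div_gcd hg, Nat.cast_one]
  have hdw : d.1 * w.2 = d.2 * w.1 := by
    have h1 : v.1 = g * w.1 := (congrArg Prod.fst hgw).symm
    have h2 : v.2 = g * w.2 := (congrArg Prod.snd hgw).symm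
    have : (g : ℤ) * (d.1 * w.2 - d.2 * w.1) = 0 := by
      unfold cross at h; rw [h1, h2] at h; linear_combination h
    have := (mul_eq_zero.mp this).resolve_left (by positivity)
    linarith
  refine ⟨w, g, d.1 * Int.gcdA w.1 w.2 + d.2 * Int.gcdB w.1 w.2, hgw, Prod.ext ?_ ?_⟩
  · change _ * w.1 = d.1
    linear_combination d.1 * hbez + Int.gcdB w.1 w.2 * hdw.symm
  · change _ * w.2 = d.2
    linear_combination d.2 * hbez + Int.gcdA w.1 w.2 * hdw

namespace IsVisibleIn

variable {Λ : AddSubgroup (ℤ × ℤ)} {v : ℤ × ℤ}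

theorem ne_zero (hvis : IsVisibleIn Λ v) : v ≠ 0 :=
  fun h ↦ hvis 2 le_rfl 0 Λ.zero_mem (by simp [h])

theorem dvd_of_smul_mem (hvis : IsVisibleIn Λ v) (hv : v ∈ Λ) {w : ℤ × ℤ} {g : ℕ} {t : ℤ}
    (hgw : (g : ℤ) • w = v) (ht : t • w ∈ Λ) : (g : ℤ) ∣ t := by
  set s := Int.gcd t g
  have hg : g ≠ 0 := by rintro rfl; exact hvis.ne_zero (by simp [← hgw])
  have hsw : (s : ℤ) • w ∈ Λ := by
    rw [Int.gcd_eq_gcd_ab, add_smul, mul_comm, mul_smul, mul_comm, mul_smul, hgw]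
    exact Λ.add_mem (Λ.zsmul_mem ht _) (Λ.zsmul_mem hv _)
  have hsg : s ∣ g := Int.ofNat_dvd.mp (Int.gcd_dvd_right _ _)
  have hquot : g / s = 1 := by
    have hpos : 0 < g / s := Nat.div_pos (Nat.le_of_dvd (Nat.pos_of_ne_zero hg) hsg)
      (Nat.pos_of_dvd_of_pos hsg (Nat.pos_of_ne_zero hg))
    by_contra hne
    refine hvis (g / s) (by omega) _ hsw ?_
    rw [smul_smul, ← hgw, ← Nat.cast_mul, Nat.div_mul_cancel hsg]
  have : s = g := by
    rw [← Nat.div_mul_cancel hsg, hquot, one_mul]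
  exact this ▸ Int.gcd_dvd_left _ _

theorem eq_of_cross_eq_zero (hvis : IsVisibleIn Λ v) (hv : v ∈ Λ) {d : ℤ × ℤ} (hd : d ∈ Λ)
    (hcross : cross d v = 0) (hpos : 0 < d.1 + d.2) (hle : d.1 + d.2 ≤ v.1 + v.2) : d = v := by
  obtain ⟨w, g, t, rfl, rfl⟩ := exists_smul_eq_smul_of_cross_eq_zero hvis.ne_zero hcross
  obtain ⟨m, rfl⟩ := hvis.dvd_of_smul_mem hv rfl hd
  have hsum : ((g : ℤ) * m) * (w.1 + w.2) = m * (g * (w.1 + w.2)) := by ring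
  simp only [Prod.smul_fst, Prod.smul_snd, smul_eq_mul, ← mul_add, hsum] at hpos hle
  have hm : m = 1 := by nlinarith
  rw [hm, mul_one]

end IsVisibleIn

/-- The staircase digitization of the segment from `0` to `(a, k - a)`: its `i`-th node is the
lattice point on the antidiagonal `x + y = i` with `x = ⌊i a / k⌋`. -/
def stairPath (a : ℤ) (k : ℕ) (i : ℕ) : ℤ × ℤ := (i * a / k, i - i * a / k)

namespace stairPath

variable (a : ℤ) (k : ℕ)

@[simp]
theorem zero : stairPath a k 0 = 0 := by
  simp [stairPath]

theorem self (hk : k ≠ 0) : stairPath a k k = (a, k - a) := by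
  simp [stairPath, Int.mul_ediv_cancel_left a (Int.natCast_ne_zero.mpr hk)]

theorem fst_add_snd (i : ℕ) : (stairPath a k i).1 + (stairPath a k i).2 = i := by
  simp [stairPath]

theorem cross_sub (i j : ℕ) :
    cross (stairPath a k j - stairPath a k i) (a, k - a) = i * a % k - j * a % k := by
  simp only [stairPath, cross, Prod.fst_sub, Prod.snd_sub, Int.emod_def]
  ring

theorem succ_sub (ha : 0 ≤ a) (hak : a ≤ k) (i : ℕ) :
    stairPath a k (i + 1) - stairPath a k i = (1, 0) ∨
      stairPath a k (i + 1) - stairPath a k i = (0, 1) := by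
  rcases Nat.eq_zero_or_pos k with rfl | hk
  · obtain rfl : a = 0 := by omega
    simp [stairPath]
  have hk' : (0 : ℤ) < k := by exact_mod_cast hk
  have hdiv (n : ℤ) : k * (n / k) + n % k = n := Int.mul_ediv_add_emod n k
  have hstep : i * a / k ≤ (i + 1) * a / k ∧ (i + 1) * a / k ≤ i * a / k + 1 := by
    have h₀ := hdiv (i * a); have h₁ := hdiv ((i + 1) * a)
    have := Int.emod_nonneg (i * a) hk'.ne'; have := Int.emod_lt_of_pos (i * a) hk'
    have := Int.emod_nonneg ((i + 1) * a) hk'.ne'; have := Int.emod_lt_of_pos ((i + 1) * a) hk'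
    constructor <;> nlinarith
  simp only [stairPath, Prod.ext_iff, Prod.fst_sub, Prod.snd_sub, Nat.cast_add, Nat.cast_one]
  omega

end stairPath

theorem eq_zero_and_eq_of_stairPath_sub_mem {Λ : AddSubgroup (ℤ × ℤ)} {v : ℤ × ℤ} (hv : v ∈ Λ)
    (hvis : IsVisibleIn Λ v) {k : ℕ} (hk : (k : ℤ) = v.1 + v.2) (hkΛ : k ≤ Λ.index) {i j : ℕ}
    (hij : i < j) (hjk : j ≤ k) (hmem : stairPath v.1 k j - stairPath v.1 k i ∈ Λ) :
    i = 0 ∧ j = k := by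
  set d := stairPath v.1 k j - stairPath v.1 k i
  have hk0 : (0 : ℤ) < k := by omega
  have hcross : cross d v = i * v.1 % k - j * v.1 % k := by
    have hv' : (v.1, (k : ℤ) - v.1) = v := Prod.ext rfl (by simp; omega)
    rw [← stairPath.cross_sub, hv']
  have hzero : cross d v = 0 := by
    refine Int.eq_zero_of_abs_lt_dvd (Λ.index_dvd_cross hmem hv) ?_
    have := Int.emod_nonneg (i * v.1) hk0.ne'; have := Int.emod_lt_of_pos (i * v.1) hk0
    have := Int.emod_nonneg (j * v.1) hk0.ne'; have := Int.emod_lt_of_pos (j * v.1) hk0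
    have : (k : ℤ) ≤ Λ.index := by exact_mod_cast hkΛ
    rw [hcross, abs_lt]
    constructor <;> linarith
  have hsum : d.1 + d.2 = j - i := by
    have := stairPath.fst_add_snd v.1 k i; have := stairPath.fst_add_snd v.1 k j
    simp only [d, Prod.fst_sub, Prod.snd_sub]
    linarith
  have hdv : d = v := hvis.eq_of_cross_eq_zero hv hmem hzero (by omega) (by omega)
  rw [hdv] at hsum
  omega

theorem exists_latticePath_of_visible_general (Λ : AddSubgroup (ℤ × ℤ))
    (v : ℤ × ℤ) (hvΛ : v ∈ Λ) (hv1 : 0 ≤ v.1) (hv2 : 0 ≤ v.2)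
    (hvis : IsVisibleIn Λ v) (hlen : v.1 + v.2 ≤ (Λ.index : ℤ)) :
    ∃ (p : ℕ → ℤ × ℤ) (k : ℕ), p 0 = 0 ∧ p k = v ∧
      (∀ i < k, p (i + 1) - p i = ((1 : ℤ), (0 : ℤ)) ∨
        p (i + 1) - p i = ((0 : ℤ), (1 : ℤ))) ∧
      (∀ i ≤ k, ∀ j ≤ k, i ≠ j → p j - p i ∈ Λ →
        (i = 0 ∧ j = k) ∨ (i = k ∧ j = 0)) := by
  obtain ⟨k, hk⟩ : ∃ k : ℕ, (k : ℤ) = v.1 + v.2 := ⟨(v.1 + v.2).toNat, by omega⟩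
  have hk0 : k ≠ 0 := by
    rintro rfl
    exact hvis.ne_zero (Prod.ext (by simp; omega) (by simp; omega))
  have hkΛ : k ≤ Λ.index := by exact_mod_cast hk.trans_le hlen
  refine ⟨stairPath v.1 k, k, stairPath.zero _ _, ?_,
    fun i _ ↦ stairPath.succ_sub _ _ hv1 (by omega) i, ?_⟩
  · rw [stairPath.self _ _ hk0]
    exact Prod.ext rfl (by omega)
  · intro i hi j hj hij hmem
    rcases hij.lt_or_gt with h | h
    · exact Or.inl (eq_zero_and_eq_of_stairPath_sub_mem hvΛ hvis hk hkΛ h hj hmem)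
    · exact Or.inr (eq_zero_and_eq_of_stairPath_sub_mem hvΛ hvis hk hkΛ h hi
        (by simpa using Λ.neg_mem hmem)).symm

/-- If `v ∈ Λ ∩ ℕ²` is visible in `Λ` and `‖v‖₁ ≤ vol(Λ)`, then there is a lattice path
from `0` to `v` such that no difference of two distinct path nodes, other than `v - 0`,
lies in `Λ`. -/
theorem exists_latticePath_of_visible (Λ : AddSubgroup (ℤ × ℤ)) (hΛ : Λ.index ≠ 0)
    (v : ℤ × ℤ) (hvΛ : v ∈ Λ) (hv1 : 0 ≤ v.1) (hv2 : 0 ≤ v.2) (hv0 : v ≠ 0)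
    (hvis : IsVisibleIn Λ v) (hlen : v.1 + v.2 ≤ (Λ.index : ℤ)) :
    ∃ (p : ℕ → ℤ × ℤ) (k : ℕ), p 0 = 0 ∧ p k = v ∧
      (∀ i < k, p (i + 1) - p i = ((1 : ℤ), (0 : ℤ)) ∨
        p (i + 1) - p i = ((0 : ℤ), (1 : ℤ))) ∧
      (∀ i ≤ k, ∀ j ≤ k, i ≠ j → p j - p i ∈ Λ →
        (i = 0 ∧ j = k) ∨ (i = k ∧ j = 0)) :=
  exists_latticePath_of_visible_general Λ v hvΛ hv1 hv2 hvis hlen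
end

section
/- Let Λ ⊆ ℤ² be a rank-2 sublattice and v = (v₁,v₂) ∈ Λ ∩ ℕ², v ≠ 0. Then there is a lattice path from 0 to v whose only pair of distinct nodes congruent modulo Λ is (0, v) if and only if v is visible in Λ and v₁ + v₂ ≤ vol(Λ). -/
open Finset

theorem exists_eq_of_step_le_one {f : ℕ → ℤ} {a b : ℕ} {y : ℤ} (hab : a ≤ b)
    (hstep : ∀ i, a ≤ i → i < b → f (i + 1) ≤ f i + 1) (ha : f a ≤ y) (hb : y ≤ f b) :
    ∃ c ∈ Set.Icc a b, f c = y := by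
  induction b, hab using Nat.le_induction with
  | base => exact ⟨a, ⟨le_rfl, le_rfl⟩, le_antisymm ha hb⟩
  | succ b hab ih =>
    by_cases hyb : y ≤ f b
    · obtain ⟨c, ⟨hac, hcb⟩, hc⟩ := ih (fun i hai hib => hstep i hai (by omega)) hyb
      exact ⟨c, ⟨hac, by omega⟩, hc⟩
    · have := hstep b hab (by omega)
      exact ⟨b + 1, ⟨by omega, le_rfl⟩, by omega⟩

theorem exists_eq_of_abs_step_le_one {f : ℕ → ℤ} {a b : ℕ} {y : ℤ}
    (hstep : ∀ i, min a b ≤ i → i < max a b → |f (i + 1) - f i| ≤ 1)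
    (ha : f a ≤ y) (hb : y ≤ f b) : ∃ c ∈ Set.uIcc a b, f c = y := by
  rcases le_total a b with hab | hba
  · obtain ⟨c, hc, hfc⟩ := exists_eq_of_step_le_one hab
      (fun i hai hib => by
        have := hstep i (by omega) (by omega)
        rw [abs_le] at this; linarith) ha hb
    exact ⟨c, Set.Icc_subset_uIcc hc, hfc⟩
  · obtain ⟨c, hc, hfc⟩ := exists_eq_of_step_le_one (f := fun i => -f i) (y := -y) hba
      (fun i hbi hia => by
        have := hstep i (by omega) (by omega)
        rw [abs_le] at this; linarith) (neg_le_neg hb) (neg_le_neg ha)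
    exact ⟨c, Set.Icc_subset_uIcc' hc, neg_inj.mp hfc⟩

def wedge (w v : ℤ × ℤ) : ℤ := w.1 * v.2 - w.2 * v.1

theorem wedge_sub_left (u w v : ℤ × ℤ) : wedge (u - w) v = wedge u v - wedge w v := by
  simp only [wedge, Prod.fst_sub, Prod.snd_sub]; ring

theorem smul_eq_smul_of_wedge_eq_zero {w v : ℤ × ℤ} (h : wedge w v = 0) :
    (v.1 + v.2) • w = (w.1 + w.2) • v := by
  simp only [wedge] at h
  ext <;> simp only [Prod.smul_fst, Prod.smul_snd, smul_eq_mul]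
  · linear_combination h
  · linear_combination -h

theorem index_dvd_wedge (Λ : AddSubgroup (ℤ × ℤ)) {w v : ℤ × ℤ} (hw : w ∈ Λ) (hv : v ∈ Λ) :
    (Λ.index : ℤ) ∣ wedge w v := by
  let f : (ℤ × ℤ) →ₗ[ℤ] (ℤ × ℤ) :=
    (LinearMap.fst ℤ ℤ ℤ).smulRight w + (LinearMap.snd ℤ ℤ ℤ).smulRight v
  have hf : ∀ x, f x = x.1 • w + x.2 • v := fun x => rfl
  have hdet : LinearMap.det f = wedge w v := by
    rw [← LinearMap.det_toMatrix (Module.Basis.finTwoProd ℤ), Matrix.det_fin_two]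
    simp [LinearMap.toMatrix_apply, f, wedge]
    ring
  by_cases h0 : wedge w v = 0
  · simp [h0]
  have hinj : Function.Injective f := by
    rw [← LinearMap.ker_eq_bot, LinearMap.ker_eq_bot']
    intro x hx
    have h1 : (x.1 • w + x.2 • v).1 = 0 := by rw [← hf, hx]; rfl
    have h2 : (x.1 • w + x.2 • v).2 = 0 := by rw [← hf, hx]; rfl
    simp only [Prod.fst_add, Prod.snd_add, Prod.smul_fst, Prod.smul_snd, smul_eq_mul] at h1 h2
    have hx1 : x.1 * wedge w v = 0 := by unfold wedge; linear_combination v.2 * h1 - v.1 * h2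
    have hx2 : x.2 * wedge w v = 0 := by unfold wedge; linear_combination w.1 * h2 - w.2 * h1
    exact Prod.ext ((mul_eq_zero.mp hx1).resolve_right h0) ((mul_eq_zero.mp hx2).resolve_right h0)
  -- `|det f|` is the index of the sublattice spanned by `w` and `v`, which lies in `Λ`.
  have hcard := Submodule.natAbs_det_equiv (LinearMap.range f) (LinearEquiv.ofInjective f hinj)
  change (LinearMap.det f).natAbs = (LinearMap.range f).toAddSubgroup.index at hcard
  have hle : (LinearMap.range f).toAddSubgroup ≤ Λ := by
    rintro _ ⟨x, rfl⟩
    rw [hf]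
    exact Λ.add_mem (Λ.zsmul_mem hw _) (Λ.zsmul_mem hv _)
  rw [← hdet, Int.natCast_dvd, hcard]
  exact AddSubgroup.index_dvd_of_le hle

theorem IsVisibleIn.dvd_of_smul_eq_smul {Λ : AddSubgroup (ℤ × ℤ)} {v w : ℤ × ℤ} {k n : ℕ}
    (hvis : IsVisibleIn Λ v) (hw : w ∈ Λ) (hv : v ∈ Λ) (h : (k : ℤ) • w = (n : ℤ) • v) :
    k ∣ n := by
  set g := Nat.gcd n k
  by_cases hg : g = 0
  · obtain ⟨hn, hk⟩ := Nat.gcd_eq_zero_iff.mp hg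
    simp [hn, hk]
  obtain ⟨e, hke⟩ : g ∣ k := Nat.gcd_dvd_right n k
  set u := Nat.gcdA n k • w + Nat.gcdB n k • v
  have hu : u ∈ Λ := Λ.add_mem (Λ.zsmul_mem hw _) (Λ.zsmul_mem hv _)
  -- By Bézout `u = (g / k) • v`, so `v = (k / g) • u` is a multiple of a vector of `Λ`.
  have hku : (k : ℤ) • u = (g : ℤ) • v := by
    linear_combination (norm := module) Nat.gcdA n k • h - Nat.gcd_eq_gcd_ab n k • v
  have heu : (e : ℤ) • u = v := by
    apply smul_right_injective (ℤ × ℤ) (Int.natCast_ne_zero.mpr hg)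
    show (g : ℤ) • (e : ℤ) • u = (g : ℤ) • v
    rw [smul_smul, ← Nat.cast_mul, ← hke, hku]
  match e, hke, heu with
  | 0, _, heu => exact (hvis 2 le_rfl 0 (zero_mem Λ) (by rw [← heu]; simp)).elim
  | 1, hke, _ => rw [hke, mul_one]; exact Nat.gcd_dvd_left n k
  | e + 2, _, heu => exact (hvis (e + 2) (by omega) u hu heu).elim

def IsLatticePath (p : ℕ → ℤ × ℤ) (k : ℕ) : Prop :=
  ∀ i < k, p (i + 1) - p i = ((1 : ℤ), (0 : ℤ)) ∨ p (i + 1) - p i = ((0 : ℤ), (1 : ℤ))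

def IsSimpleCycleMod (Λ : AddSubgroup (ℤ × ℤ)) (p : ℕ → ℤ × ℤ) (k : ℕ) : Prop :=
  ∀ i ≤ k, ∀ j ≤ k, i ≠ j → p j - p i ∈ Λ → (i = 0 ∧ j = k) ∨ (i = k ∧ j = 0)

namespace IsLatticePath

variable {p : ℕ → ℤ × ℤ} {k : ℕ}

theorem fst_succ_sub_mem_Icc (hp : IsLatticePath p k) {i : ℕ} (hi : i < k) :
    (p (i + 1)).1 - (p i).1 ∈ Set.Icc 0 1 := by
  rcases hp i hi with h | h <;> simp [← Prod.fst_sub, h]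

theorem fst_add_snd (hp : IsLatticePath p k) {i : ℕ} (hi : i ≤ k) :
    (p i).1 + (p i).2 = (p 0).1 + (p 0).2 + i := by
  induction i with
  | zero => simp
  | succ i ih =>
    have := ih (by omega)
    rcases hp i (by omega) with h | h <;>
    · have h1 := congrArg Prod.fst h
      have h2 := congrArg Prod.snd h
      simp only [Prod.fst_sub, Prod.snd_sub] at h1 h2
      push_cast
      linarith

theorem sub_eq_of_fst_sub_eq (hp : IsLatticePath p k) {i j : ℕ} (hi : i ≤ k) (hj : j ≤ k)
    {w : ℤ × ℤ} (h1 : (p j).1 - (p i).1 = w.1) (hji : (j : ℤ) - i = w.1 + w.2) :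
    p j - p i = w := by
  have := hp.fst_add_snd hi
  have := hp.fst_add_snd hj
  ext
  · exact h1
  · simp only [Prod.snd_sub]; linarith

theorem abs_fst_window_succ_sub_le_one (hp : IsLatticePath p k) {i m : ℕ} (hi : i + m < k) :
    |((p (i + 1 + m)).1 - (p (i + 1)).1) - ((p (i + m)).1 - (p i).1)| ≤ 1 := by
  obtain ⟨h₁, h₁'⟩ := hp.fst_succ_sub_mem_Icc hi
  obtain ⟨h₂, h₂'⟩ := hp.fst_succ_sub_mem_Icc (i := i) (by omega)
  rw [show i + 1 + m = i + m + 1 by omega, abs_le]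
  constructor <;> linarith

theorem exists_sub_eq_of_sub_eq_smul (hp : IsLatticePath p k) {d m : ℕ} {w : ℤ × ℤ}
    (hd : 0 < d) (hm : (m : ℤ) = w.1 + w.2) (hpk : p k - p 0 = (d : ℤ) • w) :
    k = d * m ∧ ∃ c, c + m ≤ k ∧ p (c + m) - p c = w := by
  have hk : k = d * m := by
    have h1 := congrArg Prod.fst hpk
    have h2 := congrArg Prod.snd hpk
    simp only [Prod.fst_sub, Prod.snd_sub, Prod.smul_fst, Prod.smul_snd, smul_eq_mul] at h1 h2
    have := hp.fst_add_snd le_rfl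
    have : (k : ℤ) = d * m := by rw [hm]; linarith
    exact_mod_cast this
  refine ⟨hk, ?_⟩
  have hlast : ∀ t < d, t * m + m ≤ k := fun t ht => by
    rw [hk, ← Nat.succ_mul]; exact Nat.mul_le_mul_right m ht
  set f : ℕ → ℤ := fun j => (p (j + m)).1 - (p j).1 - w.1 with hf
  -- Over the `d` consecutive blocks of length `m`, `f` sums to `0`, so it changes sign.
  have hsum : ∑ t ∈ range d, f (t * m) = 0 := by
    have hblock : ∀ t ∈ range d, f (t * m) = ((p ((t + 1) * m)).1 - (p (t * m)).1) - w.1 :=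
      fun t _ => by rw [Nat.succ_mul]
    rw [sum_congr rfl hblock, sum_sub_distrib, sum_range_sub (fun t => (p (t * m)).1),
      sum_const, card_range, ← hk, zero_mul, nsmul_eq_mul]
    have := congrArg Prod.fst hpk
    simp only [Prod.fst_sub, Prod.smul_fst, smul_eq_mul] at this
    rw [this, sub_self]
  have hne : (range d).Nonempty := nonempty_range_iff.mpr hd.ne'
  obtain ⟨t₁, ht₁, hf₁⟩ := exists_le_of_sum_le (f := fun t => f (t * m))
    (g := fun _ => 0) hne (by simp [hsum])
  obtain ⟨t₂, ht₂, hf₂⟩ := exists_le_of_sum_le (f := fun _ => 0)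
    (g := fun t => f (t * m)) hne (by simp [hsum])
  have hwin₁ := hlast t₁ (mem_range.mp ht₁)
  have hwin₂ := hlast t₂ (mem_range.mp ht₂)
  have hstep : ∀ i, min (t₁ * m) (t₂ * m) ≤ i → i < max (t₁ * m) (t₂ * m) →
      |f (i + 1) - f i| ≤ 1 := fun i _ hi => by
    have := hp.abs_fst_window_succ_sub_le_one (i := i) (m := m) (by omega)
    simp only [hf]
    convert this using 2; ring
  obtain ⟨c, hc, hfc⟩ := exists_eq_of_abs_step_le_one hstep hf₁ hf₂
  have hcm : c + m ≤ k := by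
    rw [Set.mem_uIcc] at hc
    omega
  refine ⟨c, hcm, hp.sub_eq_of_fst_sub_eq (by omega) hcm (by simp only [hf] at hfc; linarith) ?_⟩
  push_cast; linarith

end IsLatticePath

namespace IsSimpleCycleMod

variable {Λ : AddSubgroup (ℤ × ℤ)} {p : ℕ → ℤ × ℤ} {k : ℕ}

theorem of_lt (h : ∀ i j, i < j → j ≤ k → p j - p i ∈ Λ → i = 0 ∧ j = k) :
    IsSimpleCycleMod Λ p k := by
  intro i hi j hj hij hmem
  rcases Nat.lt_or_gt_of_ne hij with hlt | hlt
  · exact Or.inl (h i j hlt hj hmem)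
  · have := h j i hlt hi (by simpa using Λ.neg_mem hmem)
    exact Or.inr ⟨this.2, this.1⟩

theorem le_index (h : IsSimpleCycleMod Λ p k) (hΛ : Λ.index ≠ 0) : k ≤ Λ.index := by
  have : Λ.FiniteIndex := ⟨hΛ⟩
  have hinj : Function.Injective fun i : Fin k => (p i : (ℤ × ℤ) ⧸ Λ) := by
    intro i j hij
    have hmem : p j - p i ∈ Λ := by
      simpa [neg_add_eq_sub] using QuotientAddGroup.eq.mp hij
    by_contra hne
    rcases h i i.2.le j j.2.le (fun h => hne (Fin.ext h)) hmem with ⟨_, h⟩ | ⟨h, _⟩ <;> omega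
  simpa [AddSubgroup.index] using Nat.card_le_card_of_injective _ hinj

end IsSimpleCycleMod

theorem IsLatticePath.isVisibleIn {Λ : AddSubgroup (ℤ × ℤ)} {p : ℕ → ℤ × ℤ} {k : ℕ}
    {v : ℤ × ℤ} (hp : IsLatticePath p k) (hsimple : IsSimpleCycleMod Λ p k) (hp0 : p 0 = 0)
    (hpk : p k = v) (hv1 : 0 ≤ v.1) (hv2 : 0 ≤ v.2) (hv0 : v ≠ 0) : IsVisibleIn Λ v := by
  intro d hd w hw hdw
  have hk : v.1 + v.2 = k := by simpa [hp0, hpk] using hp.fst_add_snd le_rfl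
  have hvpos : 0 < v.1 + v.2 := by
    by_contra hle
    exact hv0 (Prod.ext (by simp; omega) (by simp; omega))
  have hwsum : 0 ≤ w.1 + w.2 := by
    rw [← hdw] at hvpos
    simp only [Prod.smul_fst, Prod.smul_snd, smul_eq_mul, ← mul_add] at hvpos
    exact (pos_of_mul_pos_right hvpos (by positivity)).le
  obtain ⟨m, hm⟩ := Int.eq_ofNat_of_zero_le hwsum
  obtain ⟨hkdm, c, hck, hc⟩ :=
    hp.exists_sub_eq_of_sub_eq_smul (d := d) (by omega) hm.symm (by rw [hp0, hpk, sub_zero, hdw])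
  have h2m : 2 * m ≤ k := hkdm ▸ Nat.mul_le_mul_right m hd
  have hm0 : 0 < m := Nat.pos_of_ne_zero (by rintro rfl; rw [mul_zero] at hkdm; omega)
  rcases hsimple c (by omega) (c + m) hck (by omega) (hc ▸ hw) with ⟨_, _⟩ | ⟨_, _⟩ <;> omega

/-- The lattice path whose `s`-th node has first coordinate `⌊s a / k⌋`: it runs from `0` to
`(a, k - a)` staying just above the segment joining them. -/
def upperChristoffelPath (a k s : ℕ) : ℤ × ℤ :=
  ((s * a / k : ℕ), (s : ℤ) - (s * a / k : ℕ))

section upperChristoffelPath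

variable {a k : ℕ}

theorem upperChristoffelPath_zero : upperChristoffelPath a k 0 = 0 := by
  simp [upperChristoffelPath]

theorem upperChristoffelPath_self (hk : 0 < k) :
    upperChristoffelPath a k k = ((a : ℤ), (k : ℤ) - a) := by
  simp [upperChristoffelPath, Nat.mul_div_cancel_left a hk]

theorem upperChristoffelPath_fst_add_snd (s : ℕ) :
    (upperChristoffelPath a k s).1 + (upperChristoffelPath a k s).2 = s := by
  simp [upperChristoffelPath]

theorem isLatticePath_upperChristoffelPath (hak : a ≤ k) (n : ℕ) :
    IsLatticePath (upperChristoffelPath a k) n := by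
  intro s _
  have hle : s * a / k ≤ (s + 1) * a / k := Nat.div_le_div_right (by gcongr; omega)
  have hle' : (s + 1) * a / k ≤ s * a / k + 1 := by
    rcases Nat.eq_zero_or_pos k with rfl | hk
    · simp
    · calc (s + 1) * a / k ≤ (s * a + k) / k := Nat.div_le_div_right (by rw [Nat.succ_mul]; omega)
        _ = s * a / k + 1 := Nat.add_div_right _ hk
  rcases (by omega : (s + 1) * a / k = s * a / k + 1 ∨ (s + 1) * a / k = s * a / k) with h | h
  · left
    simp only [upperChristoffelPath, h, Prod.mk_sub_mk, Prod.mk.injEq]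
    constructor <;> push_cast <;> ring
  · right
    simp only [upperChristoffelPath, h, Prod.mk_sub_mk, Prod.mk.injEq]
    constructor <;> push_cast <;> ring

theorem wedge_upperChristoffelPath (s : ℕ) :
    wedge (upperChristoffelPath a k s) ((a : ℤ), (k : ℤ) - a) = -((s * a % k : ℕ) : ℤ) := by
  have h : (k : ℤ) * (s * a / k : ℕ) + (s * a % k : ℕ) = s * a := by
    exact_mod_cast Nat.div_add_mod (s * a) k
  simp only [wedge, upperChristoffelPath]
  linear_combination h

theorem isSimpleCycleMod_upperChristoffelPath {Λ : AddSubgroup (ℤ × ℤ)}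
    (hvΛ : ((a : ℤ), (k : ℤ) - a) ∈ Λ) (hvis : IsVisibleIn Λ ((a : ℤ), (k : ℤ) - a))
    (hkΛ : k ≤ Λ.index) : IsSimpleCycleMod Λ (upperChristoffelPath a k) k := by
  refine IsSimpleCycleMod.of_lt fun i j hij hjk hmem => ?_
  have hk : 0 < k := by omega
  have hwedge : wedge (upperChristoffelPath a k j - upperChristoffelPath a k i)
      ((a : ℤ), (k : ℤ) - a) = 0 := by
    apply Int.eq_zero_of_abs_lt_dvd (index_dvd_wedge Λ hmem hvΛ)
    rw [wedge_sub_left, wedge_upperChristoffelPath, wedge_upperChristoffelPath, abs_lt]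
    have := Nat.mod_lt (i * a) hk
    have := Nat.mod_lt (j * a) hk
    omega
  have hsmul := smul_eq_smul_of_wedge_eq_zero hwedge
  rw [Prod.fst_sub, Prod.snd_sub, sub_add_sub_comm, upperChristoffelPath_fst_add_snd,
    upperChristoffelPath_fst_add_snd, add_sub_cancel, ← Nat.cast_sub hij.le] at hsmul
  have hdvd : k ∣ j - i := hvis.dvd_of_smul_eq_smul hmem hvΛ hsmul
  have := Nat.le_of_dvd (by omega) hdvd
  omega

end upperChristoffelPath

/-- For a nonzero `v ∈ Λ ∩ ℕ²`, there is a lattice path from `0` to `v` whose only pair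
of distinct nodes congruent modulo `Λ` is the pair of endpoints, if and only if `v` is
visible in `Λ` and `v₁ + v₂ ≤ vol(Λ)`. -/
theorem exists_latticePath_iff_visible_and_norm_le (Λ : AddSubgroup (ℤ × ℤ))
    (hΛ : Λ.index ≠ 0) (v : ℤ × ℤ) (hvΛ : v ∈ Λ) (hv1 : 0 ≤ v.1) (hv2 : 0 ≤ v.2)
    (hv0 : v ≠ 0) :
    (∃ (p : ℕ → ℤ × ℤ) (k : ℕ), p 0 = 0 ∧ p k = v ∧
        (∀ i < k, p (i + 1) - p i = ((1 : ℤ), (0 : ℤ)) ∨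
          p (i + 1) - p i = ((0 : ℤ), (1 : ℤ))) ∧
        (∀ i ≤ k, ∀ j ≤ k, i ≠ j → p j - p i ∈ Λ →
          (i = 0 ∧ j = k) ∨ (i = k ∧ j = 0))) ↔
      IsVisibleIn Λ v ∧ v.1 + v.2 ≤ (Λ.index : ℤ) := by
  constructor
  · rintro ⟨p, k, hp0, hpk, hpath : IsLatticePath p k, hsimple : IsSimpleCycleMod Λ p k⟩
    have hk : v.1 + v.2 = k := by simpa [hp0, hpk] using hpath.fst_add_snd le_rfl
    refine ⟨hpath.isVisibleIn hsimple hp0 hpk hv1 hv2 hv0, ?_⟩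
    exact hk ▸ Nat.cast_le.mpr (hsimple.le_index hΛ)
  · rintro ⟨hvis, hle⟩
    obtain ⟨a, ha⟩ := Int.eq_ofNat_of_zero_le hv1
    obtain ⟨k, hk⟩ := Int.eq_ofNat_of_zero_le (add_nonneg hv1 hv2)
    have hv : v = ((a : ℤ), (k : ℤ) - a) := Prod.ext ha (by omega)
    have hkpos : 0 < k := by
      by_contra hk0
      exact hv0 (Prod.ext (by simp; omega) (by simp; omega))
    rw [hv] at hvΛ hvis ⊢
    exact ⟨upperChristoffelPath a k, k, upperChristoffelPath_zero, upperChristoffelPath_self hkpos,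
      isLatticePath_upperChristoffelPath (by omega) k,
      isSimpleCycleMod_upperChristoffelPath hvΛ hvis (by omega)⟩
end

section
/- Let Λ = ℤ·v + ℤ·w ⊆ ℤ² be a rank-2 lattice with v ∈ ℕ², v ≠ 0. The projection π : ℝ² → ℝ·(1,−1) parallel to the line ℝ·v, given by π(x) = x − ((x₁+x₂)/‖v‖₁)·v, maps Λ onto the cyclic group generated by (vol(Λ)/‖v‖₁)·(1,−1). Consequently, any two distinct lines parallel to v through points of Λ are at ℓ¹-distance at least vol(Λ)/‖v‖₁ apart along the diagonal direction. -/
noncomputable def projDiag (v : ℤ × ℤ) (x : ℝ × ℝ) : ℝ × ℝ :=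
  x - ((x.1 + x.2) / ((v.1 : ℝ) + (v.2 : ℝ))) • (((v.1 : ℝ), (v.2 : ℝ)) : ℝ × ℝ)

lemma proj_eval (v w : ℤ × ℤ) (hs : ((v.1 : ℝ) + (v.2 : ℝ)) ≠ 0) (m k : ℤ) :
    projDiag v (((m • v + k • w).1 : ℝ), ((m • v + k • w).2 : ℝ)) =
      (((k : ℝ) * (-(v.1 * w.2 - v.2 * w.1) : ℤ)) / ((v.1 : ℝ) + (v.2 : ℝ))) •
        ((1 : ℝ), (-1 : ℝ)) := by
  have h1 : (m • v + k • w).1 = m * v.1 + k * w.1 := by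
    simp [Prod.smul_def, smul_eq_mul]
  have h2 : (m • v + k • w).2 = m * v.2 + k * w.2 := by
    simp [Prod.smul_def, smul_eq_mul]
  rw [h1, h2]
  unfold projDiag
  apply Prod.ext <;> simp [Prod.smul_def, smul_eq_mul] <;> field_simp <;> ring

lemma zsmul_convert (j : ℤ) (c : ℝ) (p : ℝ × ℝ) : j • c • p = ((j : ℝ) * c) • p := by
  rw [← Int.cast_smul_eq_zsmul ℝ, smul_smul]

/-- For the lattice `Λ = ℤ·v + ℤ·w` with `v ∈ ℕ²` nonzero, the projection `π` parallel
to `v` maps `Λ` onto the cyclic group generated by `(vol(Λ)/‖v‖₁)·(1,−1)`; consequently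
the first coordinates of two distinct projected lattice points differ by at least
`vol(Λ)/‖v‖₁`. -/
theorem projDiag_image_lattice (v w : ℤ × ℤ) (hv1 : 0 ≤ v.1) (hv2 : 0 ≤ v.2)
    (hv0 : v ≠ 0) (hdet : v.1 * w.2 - v.2 * w.1 ≠ 0) :
    ((fun x : ℤ × ℤ => projDiag v ((x.1 : ℝ), (x.2 : ℝ))) ''
        {x : ℤ × ℤ | ∃ m k : ℤ, x = m • v + k • w}
      = Set.range (fun k : ℤ =>
          k • (((|v.1 * w.2 - v.2 * w.1| : ℤ) : ℝ) / ((v.1 : ℝ) + (v.2 : ℝ))) •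
            (((1 : ℝ), (-1 : ℝ)) : ℝ × ℝ))) ∧
    ∀ x ∈ {x : ℤ × ℤ | ∃ m k : ℤ, x = m • v + k • w},
      ∀ y ∈ {x : ℤ × ℤ | ∃ m k : ℤ, x = m • v + k • w},
        projDiag v ((x.1 : ℝ), (x.2 : ℝ)) ≠ projDiag v ((y.1 : ℝ), (y.2 : ℝ)) →
        ((|v.1 * w.2 - v.2 * w.1| : ℤ) : ℝ) / ((v.1 : ℝ) + (v.2 : ℝ)) ≤
          |(projDiag v ((x.1 : ℝ), (x.2 : ℝ))).1 -
            (projDiag v ((y.1 : ℝ), (y.2 : ℝ))).1| := by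
  have hvne : v.1 ≠ 0 ∨ v.2 ≠ 0 := by
    by_contra h
    push_neg at h
    exact hv0 (Prod.ext h.1 h.2)
  have hsZ : 0 < v.1 + v.2 := by omega
  have hs : (0 : ℝ) < (v.1 : ℝ) + (v.2 : ℝ) := by exact_mod_cast hsZ
  have hs' : ((v.1 : ℝ) + (v.2 : ℝ)) ≠ 0 := ne_of_gt hs
  set D : ℤ := v.1 * w.2 - v.2 * w.1 with hD
  constructor
  · ext p
    constructor
    · rintro ⟨x, ⟨m, k, rfl⟩, rfl⟩
      simp only
      rw [proj_eval v w hs' m k]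
      rcases abs_cases D with ⟨habs, _⟩ | ⟨habs, _⟩
      · exact ⟨-k, by beta_reduce; rw [zsmul_convert]; congr 1; rw [habs, hD]; push_cast; ring⟩
      · exact ⟨k, by beta_reduce; rw [zsmul_convert]; congr 1; rw [habs, hD]; push_cast; ring⟩
    · rintro ⟨k, rfl⟩
      rcases abs_cases D with ⟨habs, _⟩ | ⟨habs, _⟩
      · refine ⟨(0 : ℤ) • v + (-k) • w, ⟨0, -k, rfl⟩, ?_⟩
        beta_reduce
        rw [proj_eval v w hs' 0 (-k), zsmul_convert]
        congr 1
        rw [habs, hD]; push_cast; ring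
      · refine ⟨(0 : ℤ) • v + k • w, ⟨0, k, rfl⟩, ?_⟩
        beta_reduce
        rw [proj_eval v w hs' 0 k, zsmul_convert]
        congr 1
        rw [habs, hD]; push_cast; ring
  · rintro x ⟨m, k, rfl⟩ y ⟨m', k', rfl⟩ hne
    rw [proj_eval v w hs' m k, proj_eval v w hs' m' k'] at hne ⊢
    have hk : k ≠ k' := by
      intro h
      exact hne (by rw [h])
    simp only [Prod.smul_def, smul_eq_mul, Prod.fst]
    have heq : (k : ℝ) * (-D : ℤ) / ((v.1 : ℝ) + (v.2 : ℝ)) * 1 -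
        (k' : ℝ) * (-D : ℤ) / ((v.1 : ℝ) + (v.2 : ℝ)) * 1 =
        ((k' - k : ℤ) : ℝ) * (D : ℝ) / ((v.1 : ℝ) + (v.2 : ℝ)) := by
      push_cast; ring
    rw [heq, abs_div, abs_mul, abs_of_pos hs]
    have h1 : (1 : ℝ) ≤ |((k' - k : ℤ) : ℝ)| := by
      rw [← Int.cast_abs]
      exact_mod_cast Int.one_le_abs (sub_ne_zero.mpr (Ne.symm hk))
    have h2 : ((|D| : ℤ) : ℝ) = |(D : ℝ)| := by push_cast; ring
    rw [h2]
    have h3 : (0 : ℝ) ≤ |(D : ℝ)| / ((v.1 : ℝ) + (v.2 : ℝ)) :=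
      div_nonneg (abs_nonneg _) (le_of_lt hs)
    calc |(D : ℝ)| / ((v.1 : ℝ) + (v.2 : ℝ))
        = 1 * (|(D : ℝ)| / ((v.1 : ℝ) + (v.2 : ℝ))) := by ring
      _ ≤ |((k' - k : ℤ) : ℝ)| * (|(D : ℝ)| / ((v.1 : ℝ) + (v.2 : ℝ))) :=
          mul_le_mul_of_nonneg_right h1 h3
      _ = |((k' - k : ℤ) : ℝ)| * |(D : ℝ)| / ((v.1 : ℝ) + (v.2 : ℝ)) := by ring
end

section
/- Let n ≥ 1, a, b ∈ ℤ with gcd(a,b,n) = 1, and Λ = {(u,v) ∈ ℤ² : au+bv ≡ 0 (mod n)}. The circulant digraph C⃗(n; a, b) (vertices ℤ/nℤ, arcs x → x+a and x → x+b) has a Hamiltonian circuit if and only if Λ ∩ {(x,y) ∈ ℕ² : x + y = n} contains a point visible in Λ. -/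
/-- The circulant digraph `C⃗(n;a,b)` (vertices `ℤ/nℤ`, arcs `x → x+a`, `x → x+b`)
has a Hamiltonian circuit: a closed directed walk of length `n` visiting every vertex
exactly once. -/
def IsHamiltonianCirculant (n : ℕ) (a b : ℤ) : Prop :=
  ∃ x : ℕ → ZMod n,
    (∀ i < n, x (i + 1) = x i + (a : ZMod n) ∨ x (i + 1) = x i + (b : ZMod n)) ∧
    x n = x 0 ∧
    ∀ i < n, ∀ j < n, x i = x j → i = j

/-- The circuit lattice `Λ = {(u,v) ∈ ℤ² : au + bv ≡ 0 (mod n)}`. -/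
def circLat (n : ℕ) (a b : ℤ) : Set (ℤ × ℤ) := {p | (n : ℤ) ∣ a * p.1 + b * p.2}

/-- A nonzero point `w` of `Λ` is visible in `Λ` if `(1/d) • w ∉ Λ` for all `d ≥ 2`. -/
def IsVisibleInSet (Λ : Set (ℤ × ℤ)) (v : ℤ × ℤ) : Prop :=
  ∀ d : ℕ, 2 ≤ d → ∀ w ∈ Λ, (d : ℤ) • w ≠ v

lemma gcd3_bezout (a b : ℤ) (n : ℕ) (h : Int.gcd (Int.gcd a b) n = 1) :
    ∃ α β γ : ℤ, α * a + β * b + γ * n = 1 := by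
  have h1 := Int.gcd_eq_gcd_ab (Int.gcd a b : ℤ) (n : ℤ)
  have h2 := Int.gcd_eq_gcd_ab a b
  rw [h] at h1
  refine ⟨(Int.gcdA a b) * (Int.gcdA (Int.gcd a b : ℤ) (n : ℤ)),
    (Int.gcdB a b) * (Int.gcdA (Int.gcd a b : ℤ) (n : ℤ)),
    Int.gcdB (Int.gcd a b : ℤ) (n : ℤ), ?_⟩
  push_cast at h1 ⊢
  linear_combination -h1 - (Int.gcdA (Int.gcd a b : ℤ) (n : ℤ)) * h2

lemma det_dvd (n : ℕ) (a b : ℤ) (h : Int.gcd (Int.gcd a b) n = 1)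
    (u v : ℤ × ℤ) (hu : u ∈ circLat n a b) (hv : v ∈ circLat n a b) :
    (n : ℤ) ∣ u.1 * v.2 - u.2 * v.1 := by
  obtain ⟨α, β, γ, hb⟩ := gcd3_bezout a b n h
  have hu' : (n:ℤ) ∣ a * u.1 + b * u.2 := hu
  have hv' : (n:ℤ) ∣ a * v.1 + b * v.2 := hv
  have h1 : (n:ℤ) ∣ a * (u.1 * v.2 - u.2 * v.1) := by
    have e : a * (u.1 * v.2 - u.2 * v.1) = v.2 * (a * u.1 + b * u.2) - u.2 * (a * v.1 + b * v.2) := by ring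
    rw [e]; exact dvd_sub (Dvd.dvd.mul_left hu' _) (Dvd.dvd.mul_left hv' _)
  have h2 : (n:ℤ) ∣ b * (u.1 * v.2 - u.2 * v.1) := by
    have e : b * (u.1 * v.2 - u.2 * v.1) = u.1 * (a * v.1 + b * v.2) - v.1 * (a * u.1 + b * u.2) := by ring
    rw [e]; exact dvd_sub (Dvd.dvd.mul_left hv' _) (Dvd.dvd.mul_left hu' _)
  have h3 : (n:ℤ) ∣ (n:ℤ) * (u.1 * v.2 - u.2 * v.1) := Dvd.intro _ rfl
  have e : u.1 * v.2 - u.2 * v.1 =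
      α * (a * (u.1 * v.2 - u.2 * v.1)) + β * (b * (u.1 * v.2 - u.2 * v.1))
        + γ * ((n:ℤ) * (u.1 * v.2 - u.2 * v.1)) := by
    linear_combination (-(u.1 * v.2 - u.2 * v.1)) * hb
  rw [e]
  exact dvd_add (dvd_add (Dvd.dvd.mul_left h1 _) (Dvd.dvd.mul_left h2 _)) (Dvd.dvd.mul_left h3 _)

lemma sign_const (f : ℕ → ℤ) (lo hi : ℕ)
    (hstep : ∀ t, lo ≤ t → t < hi → f (t+1) - f t ≤ 1 ∧ f t - f (t+1) ≤ 1)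
    (hne : ∀ t, lo ≤ t → t ≤ hi → f t ≠ 0) (hlohi : lo ≤ hi) :
    (∀ t, lo ≤ t → t ≤ hi → 0 < f t) ∨ (∀ t, lo ≤ t → t ≤ hi → f t < 0) := by
  rcases lt_or_gt_of_ne (hne lo le_rfl hlohi) with hneg | hpos
  · right
    intro t ht
    induction t, ht using Nat.le_induction with
    | base => intro _; exact hneg
    | succ t ht ih =>
      intro ht'
      have h1 := ih (by omega)
      have h2 := hstep t (by omega) (by omega)
      have h3 := hne (t+1) (by omega) ht'
      omega
  · left
    intro t ht
    induction t, ht using Nat.le_induction with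
    | base => intro _; exact hpos
    | succ t ht ih =>
      intro ht'
      have h1 := ih (by omega)
      have h2 := hstep t (by omega) (by omega)
      have h3 := hne (t+1) (by omega) ht'
      omega

lemma forward_dir (n : ℕ) (hn : 1 ≤ n) (a b : ℤ)
    (H : IsHamiltonianCirculant n a b) :
    ∃ w : ℤ × ℤ, w ∈ circLat n a b ∧ 0 ≤ w.1 ∧ 0 ≤ w.2 ∧ w.1 + w.2 = n ∧
      IsVisibleInSet (circLat n a b) w := by
  classical
  obtain ⟨x, hstep, hclose, hinj⟩ := H
  set g : ℕ → ℤ := fun i =>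
    ∑ j ∈ Finset.range i, (if x (j+1) = x j + (a:ZMod n) then (1:ℤ) else 0) with hg
  have hg0 : g 0 = 0 := by simp [hg]
  have hgstep : ∀ i, g (i+1) = g i + (if x (i+1) = x i + (a:ZMod n) then (1:ℤ) else 0) :=
    fun i => Finset.sum_range_succ _ i
  have hg01 : ∀ i, g i ≤ g (i+1) ∧ g (i+1) ≤ g i + 1 := by
    intro i; rw [hgstep]; split <;> omega
  have hgnn : ∀ i : ℕ, 0 ≤ g i ∧ g i ≤ i := by
    intro i
    induction i with
    | zero => simp [hg0]
    | succ i ih =>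
      have := hg01 i
      push_cast
      omega
  have key : ∀ i, i ≤ n → ((a * g i + b * ((i:ℤ) - g i) : ℤ) : ZMod n) = x i - x 0 := by
    intro i
    induction i with
    | zero => simp [hg0]
    | succ i ih =>
      intro hi
      have ih' := ih (by omega)
      by_cases hA : x (i+1) = x i + (a:ZMod n)
      · have hgi : g (i+1) = g i + 1 := by rw [hgstep, if_pos hA]
        have e : (a * g (i+1) + b * (((i+1:ℕ):ℤ) - g (i+1)) : ℤ)
            = (a * g i + b * ((i:ℤ) - g i)) + a := by rw [hgi]; push_cast; ring
        rw [e, Int.cast_add, ih', hA]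
        push_cast
        ring
      · have hB : x (i+1) = x i + (b:ZMod n) := (hstep i (by omega)).resolve_left hA
        have hgi : g (i+1) = g i := by rw [hgstep, if_neg hA]; ring
        have e : (a * g (i+1) + b * (((i+1:ℕ):ℤ) - g (i+1)) : ℤ)
            = (a * g i + b * ((i:ℤ) - g i)) + b := by rw [hgi]; push_cast; ring
        rw [e, Int.cast_add, ih', hB]
        push_cast
        ring
  have hwdvd : (n:ℤ) ∣ a * g n + b * ((n:ℤ) - g n) := by
    rw [← ZMod.intCast_zmod_eq_zero_iff_dvd, key n le_rfl, hclose, sub_self]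
  refine ⟨(g n, (n:ℤ) - g n), hwdvd, (hgnn n).1, by simp; linarith [(hgnn n).2],
    by simp, ?_⟩
  intro d hd u hu hdu
  have hd2 : (2:ℤ) ≤ (d:ℤ) := by exact_mod_cast hd
  have hudvd : (n:ℤ) ∣ a * u.1 + b * u.2 := hu
  obtain ⟨hu1, hu2⟩ : (d:ℤ) * u.1 = g n ∧ (d:ℤ) * u.2 = (n:ℤ) - g n := by
    have h1 := congrArg Prod.fst hdu
    have h2 := congrArg Prod.snd hdu
    simp [smul_eq_mul] at h1 h2
    exact ⟨h1, h2⟩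
  have hgN := hgnn n
  have hu1nn : 0 ≤ u.1 := by
    by_contra h'
    push_neg at h'
    have : (d:ℤ) * u.1 < 0 := mul_neg_of_pos_of_neg (by linarith) h'
    linarith
  have hu2nn : 0 ≤ u.2 := by
    by_contra h'
    push_neg at h'
    have : (d:ℤ) * u.2 < 0 := mul_neg_of_pos_of_neg (by linarith) h'
    linarith
  set m : ℕ := (u.1 + u.2).toNat with hmdef
  have hmc : (m:ℤ) = u.1 + u.2 := Int.toNat_of_nonneg (by linarith)
  have hdm : (d:ℤ) * (m:ℤ) = (n:ℤ) := by rw [hmc]; linarith [hu1, hu2, mul_add (d:ℤ) u.1 u.2]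
  have hdmn : d * m = n := by exact_mod_cast hdm
  have hm1 : 1 ≤ m := by
    by_contra h'
    push_neg at h'
    interval_cases m
    simp at hdmn
    omega
  have hmn : m < n := by
    have h2m : 2 * m ≤ d * m := Nat.mul_le_mul_right _ hd
    rw [hdmn] at h2m
    omega
  set f : ℕ → ℤ := fun t => g t - g (t - m) - u.1 with hf
  have hne : ∀ t, m ≤ t → t ≤ n → f t ≠ 0 := by
    intro t h1 h2 h0
    simp only [hf] at h0
    have hgt : g t - g (t - m) = u.1 := by linarith
    have hxt : x t = x (t - m) := by
      have k1 := key t h2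
      have k2 := key (t - m) (by omega)
      have hc : ((t - m : ℕ):ℤ) = (t:ℤ) - (m:ℤ) := by omega
      have e : (a * g t + b * ((t:ℤ) - g t) : ℤ)
          = (a * g (t-m) + b * (((t-m:ℕ):ℤ) - g (t-m))) + (a * u.1 + b * u.2) := by
        rw [hc]
        linear_combination (a - b) * hgt + b * hmc
      have hz : ((a * u.1 + b * u.2 : ℤ) : ZMod n) = 0 :=
        (ZMod.intCast_zmod_eq_zero_iff_dvd _ n).mpr hudvd
      have e2 : x t - x 0 = x (t - m) - x 0 := by
        rw [← k1, ← k2, e, Int.cast_add, hz, add_zero]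
      exact sub_left_inj.mp e2
    rcases Nat.lt_or_ge t n with htn | htn
    · have := hinj t htn (t - m) (by omega) hxt
      omega
    · have htn' : t = n := by omega
      rw [htn'] at hxt
      have hx0 : x (n - m) = x 0 := by rw [← hxt, hclose]
      have := hinj (n - m) (by omega) 0 (by omega) hx0
      omega
  have hstepf : ∀ t, m ≤ t → t < n → f (t+1) - f t ≤ 1 ∧ f t - f (t+1) ≤ 1 := by
    intro t h1 _
    have e : t + 1 - m = (t - m) + 1 := by omega
    simp only [hf, e]
    have a1 := hg01 t
    have a2 := hg01 (t - m)
    omega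
  have hjb : ∀ j, j < d → (j+1) * m ≤ n := by
    intro j hj
    calc (j+1) * m ≤ d * m := Nat.mul_le_mul_right _ (by omega)
      _ = n := hdmn
  have htel : ∑ j ∈ Finset.range d, f (n - j * m) = 0 := by
    have e : ∀ j ∈ Finset.range d, f (n - j*m)
        = ((fun j => g (n - j*m)) j - (fun j => g (n - j*m)) (j+1)) + (-u.1) := by
      intro j hj
      rw [Finset.mem_range] at hj
      have h1 := hjb j hj
      have h2 : (j+1) * m = j*m + m := by ring
      have e2 : n - j*m - m = n - (j+1)*m := by omega
      simp only [hf, e2]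
      ring
    rw [Finset.sum_congr rfl e, Finset.sum_add_distrib,
      Finset.sum_range_sub' (fun j => g (n - j*m)) d]
    simp only [Nat.mul_zero, Nat.zero_mul, Nat.sub_zero, Finset.sum_const, Finset.card_range,
      nsmul_eq_mul]
    have hz : n - d * m = 0 := by omega
    rw [hz, hg0]
    linarith [hu1]
  have hrange : ∀ j, j < d → m ≤ n - j * m ∧ n - j * m ≤ n := by
    intro j hj
    have h1 := hjb j hj
    have h2 : (j+1) * m = j*m + m := by ring
    omega
  have hdpos : (Finset.range d).Nonempty := Finset.nonempty_range_iff.mpr (by omega)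
  rcases sign_const f m n hstepf hne (by omega) with hpos | hneg
  · have hsum : 0 < ∑ j ∈ Finset.range d, f (n - j * m) := by
      apply Finset.sum_pos _ hdpos
      intro j hj
      rw [Finset.mem_range] at hj
      exact hpos _ (hrange j hj).1 (hrange j hj).2
    rw [htel] at hsum
    exact lt_irrefl 0 hsum
  · have hsum : ∑ j ∈ Finset.range d, f (n - j * m) < 0 := by
      apply Finset.sum_neg _ hdpos
      intro j hj
      rw [Finset.mem_range] at hj
      exact hneg _ (hrange j hj).1 (hrange j hj).2
    rw [htel] at hsum
    exact lt_irrefl 0 hsum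

lemma backward_dir (n : ℕ) (hn : 1 ≤ n) (a b : ℤ)
    (h : Int.gcd (Int.gcd a b) n = 1) (w : ℤ × ℤ)
    (hwL : w ∈ circLat n a b) (hw1 : 0 ≤ w.1) (hw2 : 0 ≤ w.2)
    (hwsum : w.1 + w.2 = n) (hvis : IsVisibleInSet (circLat n a b) w) :
    IsHamiltonianCirculant n a b := by
  classical
  obtain ⟨p, q⟩ := w
  simp only at hw1 hw2 hwsum
  have hwdvd : (n : ℤ) ∣ a * p + b * q := hwL
  have hn0 : (0:ℤ) < n := by exact_mod_cast hn
  have hn0' : (n:ℤ) ≠ 0 := ne_of_gt hn0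
  have hq : q = (n:ℤ) - p := by linarith
  have hpn : p ≤ (n:ℤ) := by linarith
  set φ : ℕ → ℤ := fun i => p * (i:ℤ) / n with hφ
  set x : ℕ → ZMod n := fun i => ((a * φ i + b * ((i:ℤ) - φ i) : ℤ) : ZMod n) with hx
  have hφmono : ∀ i : ℕ, φ i ≤ φ (i+1) ∧ φ (i+1) ≤ φ i + 1 := by
    intro i
    have e0 : φ (i+1) = (p * (i:ℤ) + p) / n := by
      simp only [hφ]; push_cast; ring_nf
    constructor
    · rw [e0, hφ]
      exact Int.ediv_le_ediv hn0 (by linarith)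
    · rw [e0, hφ]
      calc (p * (i:ℤ) + p) / n ≤ (p * (i:ℤ) + 1 * n) / n :=
            Int.ediv_le_ediv hn0 (by linarith)
        _ = p * (i:ℤ) / n + 1 := Int.add_mul_ediv_right _ 1 hn0'
  refine ⟨x, ?_, ?_, ?_⟩
  · -- steps
    intro i _
    obtain ⟨l, u⟩ := hφmono i
    have hcase : φ (i+1) = φ i + 1 ∨ φ (i+1) = φ i := by omega
    rcases hcase with hc | hc
    · left
      have e : (a * φ (i+1) + b * (((i+1:ℕ):ℤ) - φ (i+1)) : ℤ)
          = (a * φ i + b * ((i:ℤ) - φ i)) + a := by rw [hc]; push_cast; ring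
      simp only [hx]
      rw [e]; push_cast; ring
    · right
      have e : (a * φ (i+1) + b * (((i+1:ℕ):ℤ) - φ (i+1)) : ℤ)
          = (a * φ i + b * ((i:ℤ) - φ i)) + b := by rw [hc]; push_cast; ring
      simp only [hx]
      rw [e]; push_cast; ring
  · -- closed
    have hφ0 : φ 0 = 0 := by simp [hφ]
    have hφn : φ n = p := by
      simp only [hφ]
      exact Int.mul_ediv_cancel p hn0'
    simp only [hx, hφ0, hφn]
    have e : (a * p + b * ((n:ℤ) - p) : ℤ) = a * p + b * q := by rw [hq]
    rw [e]
    have h0 : ((a * p + b * q : ℤ) : ZMod n) = 0 :=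
      (ZMod.intCast_zmod_eq_zero_iff_dvd _ n).mpr hwdvd
    rw [h0]
    push_cast; ring
  · -- injective
    have claim : ∀ i j : ℕ, i < j → j < n → x i ≠ x j := by
      intro i j hij hjn hxe
      have hd : (n:ℤ) ∣ (a * φ j + b * ((j:ℤ) - φ j)) - (a * φ i + b * ((i:ℤ) - φ i)) := by
        rw [← ZMod.intCast_zmod_eq_zero_iff_dvd]
        simp only [hx] at hxe
        rw [Int.cast_sub, ← hxe, sub_self]
      set z1 : ℤ := φ j - φ i with hz1
      set z2 : ℤ := ((j:ℤ) - (i:ℤ)) - z1 with hz2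
      have hz : ((z1, z2) : ℤ × ℤ) ∈ circLat n a b := by
        show (n:ℤ) ∣ a * z1 + b * z2
        have e : a * z1 + b * z2
            = (a * φ j + b * ((j:ℤ) - φ j)) - (a * φ i + b * ((i:ℤ) - φ i)) := by
          rw [hz2, hz1]; ring
        rw [e]; exact hd
      have hdet := det_dvd n a b h (p, q) (z1, z2) hwL hz
      simp only at hdet
      have d1 := Int.emod_add_mul_ediv (p * (j:ℤ)) n
      have d2 := Int.emod_add_mul_ediv (p * (i:ℤ)) n
      have e2 : p * z2 - q * z1 = (p * (j:ℤ)) % n - (p * (i:ℤ)) % n := by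
        rw [hz2, hz1, hq]
        simp only [hφ]
        linarith [d1, d2]
      have b1 : 0 ≤ p * (j:ℤ) % n := Int.emod_nonneg _ hn0'
      have b2 : p * (j:ℤ) % n < n := Int.emod_lt_of_pos _ hn0
      have b3 : 0 ≤ p * (i:ℤ) % n := Int.emod_nonneg _ hn0'
      have b4 : p * (i:ℤ) % n < n := Int.emod_lt_of_pos _ hn0
      have hzero : p * z2 - q * z1 = 0 :=
        Int.eq_zero_of_abs_lt_dvd hdet (by rw [e2, abs_lt]; constructor <;> linarith)
      set k : ℕ := j - i with hk
      have hkc : (k:ℤ) = (j:ℤ) - i := by push_cast [hk]; omega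
      have hk1 : 1 ≤ k := by omega
      have hkn : k < n := by omega
      have hpk : p * (k:ℤ) = (n:ℤ) * z1 := by
        rw [hkc]; rw [hq] at hzero; rw [hz2] at hzero; linarith
      set G : ℕ := Nat.gcd n k with hG
      have hG0 : 0 < G := Nat.gcd_pos_of_pos_left _ (by omega)
      set s : ℕ := n / G with hs
      set r : ℕ := k / G with hr
      have hsG : s * G = n := Nat.div_mul_cancel (Nat.gcd_dvd_left n k)
      have hrG : r * G = k := Nat.div_mul_cancel (Nat.gcd_dvd_right n k)
      have hGk : G ≤ k := Nat.le_of_dvd (by omega) (Nat.gcd_dvd_right n k)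
      have hs2 : 2 ≤ s := by
        rcases Nat.lt_or_ge s 2 with hs' | hs'
        · interval_cases s <;> omega
        · exact hs'
      have hco : Nat.Coprime s r := Nat.coprime_div_gcd_div_gcd hG0
      obtain ⟨t, r', hbz⟩ : ∃ t r' : ℤ, t * s + r' * r = 1 := by
        have hic : IsCoprime (s:ℤ) (r:ℤ) := by
          rw [Int.isCoprime_iff_gcd_eq_one]
          simpa [Int.gcd_natCast_natCast] using hco
        obtain ⟨u', v', huv⟩ := hic
        exact ⟨u', v', huv⟩
      have hGc : (G:ℤ) ≠ 0 := by exact_mod_cast hG0.ne'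
      have hsGc : (s:ℤ) * G = n := by exact_mod_cast hsG
      have hrGc : (r:ℤ) * G = k := by exact_mod_cast hrG
      have hsz1 : (s:ℤ) * z1 = p * r := by
        have e3 : ((s:ℤ) * z1) * G = (p * r) * G := by
          linear_combination z1 * hsGc - p * hrGc - hpk
        exact mul_right_cancel₀ hGc e3
      have hsz2 : (s:ℤ) * z2 = q * r := by
        have e4 : (s:ℤ) * (k:ℤ) = (n:ℤ) * r := by
          rw [← hrGc, ← hsGc]; ring
        rw [hz2, ← hkc, hq]
        linear_combination e4 - hsz1
      set w' : ℤ × ℤ := (t * p + r' * z1, t * q + r' * z2) with hw'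
      have hw'mem : w' ∈ circLat n a b := by
        show (n:ℤ) ∣ a * (t * p + r' * z1) + b * (t * q + r' * z2)
        have e5 : a * (t * p + r' * z1) + b * (t * q + r' * z2)
            = t * (a * p + b * q) + r' * (a * z1 + b * z2) := by ring
        rw [e5]
        exact dvd_add (Dvd.dvd.mul_left hwdvd _) (Dvd.dvd.mul_left hz _)
      have hsmul : ((s:ℕ):ℤ) • w' = ((p, q) : ℤ × ℤ) := by
        have e6 : (s:ℤ) * (t * p + r' * z1) = p := by
          linear_combination r' * hsz1 + p * hbz
        have e7 : (s:ℤ) * (t * q + r' * z2) = q := by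
          linear_combination r' * hsz2 + q * hbz
        rw [hw']
        ext
        · simpa using e6
        · simpa using e7
      exact hvis s hs2 w' hw'mem hsmul
    intro i hi j hj hxe
    by_contra hne
    rcases Nat.lt_or_ge i j with hij | hij
    · exact claim i j hij hj hxe
    · exact claim j i (by omega) hi hxe.symm

/-- `C⃗(n;a,b)` is Hamiltonian iff `Λ ∩ {(x,y) ∈ ℕ² : x + y = n}` contains a point
visible in `Λ`. -/
theorem hamiltonian_iff_exists_visible (n : ℕ) (hn : 1 ≤ n) (a b : ℤ)
    (h : Int.gcd (Int.gcd a b) n = 1) :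
    IsHamiltonianCirculant n a b ↔
      ∃ w : ℤ × ℤ, w ∈ circLat n a b ∧ 0 ≤ w.1 ∧ 0 ≤ w.2 ∧ w.1 + w.2 = n ∧
        IsVisibleInSet (circLat n a b) w := by
  constructor
  · exact forward_dir n hn a b
  · rintro ⟨w, h1, h2, h3, h4, h5⟩
    exact backward_dir n hn a b h w h1 h2 h3 h4 h5
end

section
/- Let n ≥ 1 and a,b ∈ ℤ with gcd(a,b,n) = 1. The circulant digraph C⃗(n;a,b) is Hamiltonian if and only if there exist nonnegative integers i, j such that i + j = gcd(b−a, n) = gcd(ai + bj, n). -/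
open AddSubgroup Finset

theorem Nat.modEq_mul_iff_mod_eq_and_div_modEq {p o k l : ℕ} :
    k ≡ l [MOD p * o] ↔ k % p = l % p ∧ k / p ≡ l / p [MOD o] := by
  rcases p.eq_zero_or_pos with rfl | hp
  · simp [Nat.ModEq]
  constructor
  · intro h
    have hmod : k % p = l % p := h.of_mul_right o
    refine ⟨hmod, Nat.ModEq.mul_left_cancel' hp.ne' (Nat.ModEq.add_right_cancel' (k % p) ?_)⟩
    rwa [Nat.div_add_mod, hmod, Nat.div_add_mod]
  · rintro ⟨hmod, h⟩
    rw [← Nat.div_add_mod k p, ← Nat.div_add_mod l p, hmod]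
    exact (h.mul_left' p).add_right _

theorem add_mem_iff_of_forall_add_mem {G : Type*} [AddGroup G] [Finite G] {S : Set G} {c w : G}
    (hS : ∀ v ∈ S, v + c ∈ S) (hw : w ∈ zmultiples c) (v : G) : v + w ∈ S ↔ v ∈ S := by
  have key : ∀ w ∈ zmultiples c, ∀ v ∈ S, v + w ∈ S := by
    intro w hw v hv
    obtain ⟨k, rfl⟩ := mem_multiples_iff_mem_zmultiples.mpr hw
    induction k with
    | zero => simpa using hv
    | succ k ih =>
      simpa [succ_nsmul, ← add_assoc] using hS _ (ih (nsmul_mem (mem_zmultiples c) k))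
  exact ⟨fun h => by simpa using key (-w) (neg_mem hw) _ h, key w hw v⟩

variable {G : Type*} [AddCommGroup G]

theorem apply_mul_add_eq_of_sub_periodic {f : ℕ → G} {p : ℕ}
    (h : ∀ k, f (k + p + 1) - f (k + p) = f (k + 1) - f k) (q k : ℕ) :
    f (q * p + k) = f k + q • (f p - f 0) := by
  have hshift : ∀ k, f (k + p) - f k = f p - f 0 := by
    intro k
    induction k with
    | zero => simp
    | succ k ih =>
      rw [← ih, add_right_comm, ← sub_add_sub_cancel _ (f (k + p)), h k,
        ← sub_add_sub_cancel (f (k + p)) (f k)]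
      abel
  induction q with
  | zero => simp
  | succ q ih =>
    rw [add_mul, one_mul, add_right_comm, ← sub_add_cancel (f _) (f (q * p + k)), hshift, ih,
      succ_nsmul]
    abel

section Walk

variable {a b : G} {y : ℕ → G}

theorem sub_sub_nsmul_mem_zmultiples (hstep : ∀ k, y (k + 1) = y k + a ∨ y (k + 1) = y k + b)
    (k l : ℕ) : y (k + l) - y k - l • a ∈ zmultiples (b - a) := by
  induction l with
  | zero => simp
  | succ l ih =>
    have hsplit : y (k + (l + 1)) - y k - (l + 1) • a
        = (y (k + l) - y k - l • a) + (y (k + l + 1) - y (k + l) - a) := by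
      rw [succ_nsmul, ← add_assoc]; abel
    rw [hsplit]
    refine add_mem ih ?_
    rcases hstep (k + l) with h | h <;> simp [h]

theorem exists_sub_eq_nsmul_add_nsmul (hstep : ∀ k, y (k + 1) = y k + a ∨ y (k + 1) = y k + b)
    (l : ℕ) : ∃ i j : ℕ, i + j = l ∧ y l - y 0 = i • a + j • b := by
  induction l with
  | zero => exact ⟨0, 0, rfl, by simp⟩
  | succ l ih =>
    obtain ⟨i, j, hij, h⟩ := ih
    rcases hstep l with h' | h'
    · exact ⟨i + 1, j, by omega, by rw [h', add_sub_right_comm, h, succ_nsmul]; abel⟩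
    · exact ⟨i, j + 1, by omega, by rw [h', add_sub_right_comm, h, succ_nsmul]; abel⟩

end Walk

/-- `y` runs periodically around a Hamiltonian cycle of length `n` of the Cayley digraph of `G`
on `a, b` (when `Nat.card G = n`). -/
structure IsCyclicWalk (n : ℕ) (a b : G) (y : ℕ → G) : Prop where
  step : ∀ k, y (k + 1) = y k + a ∨ y (k + 1) = y k + b
  eq_iff_modEq : ∀ k l, y k = y l ↔ k ≡ l [MOD n]

namespace IsCyclicWalk

variable {n : ℕ} {a b : G} {y : ℕ → G}

theorem surjective [Finite G] (hy : IsCyclicWalk n a b y) (hG : Nat.card G = n) :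
    Function.Surjective y := by
  have hinj : Function.Injective fun k : Fin n => y k := fun k l h =>
    Fin.ext (((hy.eq_iff_modEq k l).mp h).eq_of_lt_of_lt k.2 l.2)
  intro v
  obtain ⟨k, hk⟩ := (hinj.bijective_of_nat_card_le (by simp [hG])).2 v
  exact ⟨k, hk⟩

theorem apply_add_one_eq_iff (hy : IsCyclicWalk n a b y) {k l : ℕ} :
    y (k + 1) = y (l + 1) ↔ y k = y l := by
  rw [hy.eq_iff_modEq, hy.eq_iff_modEq]
  exact ⟨Nat.ModEq.add_right_cancel' 1, Nat.ModEq.add_right 1⟩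

theorem step_eq_add_iff_of_sub_mem [Finite G] (hy : IsCyclicWalk n a b y)
    (hG : Nat.card G = n) {k l : ℕ} (hkl : y l - y k ∈ zmultiples (b - a)) :
    y (l + 1) = y l + b ↔ y (k + 1) = y k + b := by
  set S : Set G := {v | ∃ k, y k = v ∧ y (k + 1) = v + b}
  have hS : ∀ k, y k ∈ S ↔ y (k + 1) = y k + b := fun k =>
    ⟨fun ⟨k', hk', h⟩ => by rw [← h]; exact hy.apply_add_one_eq_iff.2 hk'.symm,
      fun h => ⟨k, rfl, h⟩⟩
  have hclosed : ∀ v ∈ S, v + (b - a) ∈ S := by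
    rintro _ ⟨k, rfl, hk⟩
    obtain ⟨l, hl⟩ := hy.surjective hG (y k + (b - a))
    rw [← hl, hS]
    rcases hy.step l with ha | hb
    · have hlk : y l = y k := hy.apply_add_one_eq_iff.1 (by rw [ha, hk, hl]; abel)
      have hab : b = a := sub_eq_zero.1 (by simpa [hlk] using hl)
      rw [ha, hab]
    · exact hb
  rw [← hS, ← hS, show y l = y k + (y l - y k) by abel]
  exact add_mem_iff_of_forall_add_mem hclosed hkl _

theorem step_periodic [Finite G] (hy : IsCyclicWalk n a b y) (hG : Nat.card G = n) {p : ℕ}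
    (hp : p • a ∈ zmultiples (b - a)) (k : ℕ) :
    y (k + p + 1) - y (k + p) = y (k + 1) - y k := by
  have hb := hy.step_eq_add_iff_of_sub_mem hG
    (by simpa using add_mem (sub_sub_nsmul_mem_zmultiples hy.step k p) hp)
  by_cases hbk : y (k + 1) = y k + b
  · rw [hb.2 hbk, hbk]; simp
  · rw [(hy.step (k + p)).resolve_right (hb.not.2 hbk), (hy.step k).resolve_right hbk]; simp

theorem exists_mul_addOrderOf_eq [Finite G] (hy : IsCyclicWalk n a b y) (hG : Nat.card G = n)
    {p : ℕ} (hp0 : 0 < p) (hpn : p ∣ n) (hp : p • a ∈ zmultiples (b - a)) :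
    ∃ i j : ℕ, i + j = p ∧ p * addOrderOf (i • a + j • b) = n := by
  obtain ⟨i, j, hij, hs⟩ := exists_sub_eq_nsmul_add_nsmul hy.step p
  refine ⟨i, j, hij, ?_⟩
  rw [← hs]
  have hq : ∀ q : ℕ, q • (y p - y 0) = 0 ↔ n / p ∣ q := by
    intro q
    have hyq := apply_mul_add_eq_of_sub_periodic (hy.step_periodic hG hp) q 0
    rw [add_zero] at hyq
    rw [← add_eq_left (a := y 0), ← hyq, hy.eq_iff_modEq, Nat.modEq_zero_iff_dvd]
    conv_lhs => rw [← Nat.div_mul_cancel hpn]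
    exact Nat.mul_dvd_mul_iff_right hp0
  rw [Nat.dvd_antisymm (addOrderOf_dvd_of_nsmul_eq_zero ((hq _).2 dvd_rfl))
    ((hq _).1 (addOrderOf_nsmul_eq_zero _)), Nat.mul_div_cancel' hpn]

end IsCyclicWalk

def blockWalk (a b : G) (p i k : ℕ) : G :=
  ∑ l ∈ range k, if l % p < i then a else b

section blockWalk

variable {a b : G} {p i : ℕ}

theorem blockWalk_succ (k : ℕ) :
    blockWalk a b p i (k + 1) = blockWalk a b p i k + if k % p < i then a else b :=
  sum_range_succ _ k

theorem blockWalk_step (k : ℕ) :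
    blockWalk a b p i (k + 1) = blockWalk a b p i k + a ∨
      blockWalk a b p i (k + 1) = blockWalk a b p i k + b := by
  rw [blockWalk_succ]; split_ifs <;> simp

theorem blockWalk_step_periodic (k : ℕ) :
    blockWalk a b p i (k + p + 1) - blockWalk a b p i (k + p) =
      blockWalk a b p i (k + 1) - blockWalk a b p i k := by
  simp [blockWalk_succ]

theorem blockWalk_self {j : ℕ} (hij : i + j = p) : blockWalk a b p i p = i • a + j • b := by
  subst hij
  rw [blockWalk, sum_range_add]
  congr 1
  · rw [sum_congr rfl fun l hl => if_pos ?_, sum_const, card_range]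
    rw [mem_range] at hl
    rwa [Nat.mod_eq_of_lt (by omega)]
  · rw [sum_congr rfl fun l hl => if_neg ?_, sum_const, card_range]
    rw [mem_range] at hl
    rw [Nat.mod_eq_of_lt (by omega)]
    omega

theorem isCyclicWalk_blockWalk {j : ℕ} (hij : i + j = p)
    (ha : ∀ z : ℤ, z • a ∈ zmultiples (b - a) → (p : ℤ) ∣ z) :
    IsCyclicWalk (p * addOrderOf (i • a + j • b)) a b (blockWalk a b p i) where
  step := blockWalk_step
  eq_iff_modEq k l := by
    have hy : ∀ k,
        blockWalk a b p i k = blockWalk a b p i (k % p) + (k / p) • (i • a + j • b) := by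
      intro k
      conv_lhs => rw [← Nat.div_add_mod' k p]
      rw [apply_mul_add_eq_of_sub_periodic blockWalk_step_periodic, blockWalk_self hij]
      simp [blockWalk]
    rw [Nat.modEq_mul_iff_mod_eq_and_div_modEq]
    constructor
    · intro h
      have hmod : k % p = l % p := by
        have hstep := blockWalk_step (a := a) (b := b) (p := p) (i := i)
        have hH := sub_mem (sub_sub_nsmul_mem_zmultiples hstep 0 l)
          (sub_sub_nsmul_mem_zmultiples hstep 0 k)
        have hka : ((k : ℤ) - l) • a ∈ zmultiples (b - a) := by
          convert hH using 1
          rw [zero_add, zero_add, h, sub_zsmul, natCast_zsmul, natCast_zsmul]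
          abel
        exact (Nat.modEq_iff_dvd.2 (ha _ hka)).symm
      refine ⟨hmod, ?_⟩
      rw [hy k, hy l, hmod] at h
      exact nsmul_eq_nsmul_iff_modEq.1 (add_left_cancel h)
    · rintro ⟨hmod, hdiv⟩
      rw [hy k, hy l, hmod, nsmul_eq_nsmul_iff_modEq.2 hdiv]

end blockWalk

theorem isHamiltonianCirculant_iff_exists_isCyclicWalk {n : ℕ} (hn : n ≠ 0) (a b : ℤ) :
    IsHamiltonianCirculant n a b ↔
      ∃ y : ℕ → ZMod n, IsCyclicWalk n (a : ZMod n) (b : ZMod n) y := by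
  have hpos : 0 < n := Nat.pos_of_ne_zero hn
  constructor
  · rintro ⟨x, hstep, hclose, hinj⟩
    have hsucc : ∀ k, x ((k + 1) % n) = x (k % n + 1) := by
      intro k
      rw [← Nat.mod_add_mod]
      rcases Nat.lt_or_eq_of_le (Nat.mod_lt k hpos) with h | h
      · rw [Nat.mod_eq_of_lt h]
      · rw [show k % n + 1 = n from h, Nat.mod_self, hclose]
    refine ⟨fun k => x (k % n), fun k => ?_, fun k l => ?_⟩
    · rw [hsucc]; exact hstep _ (Nat.mod_lt _ hpos)
    · exact ⟨hinj _ (Nat.mod_lt _ hpos) _ (Nat.mod_lt _ hpos), congrArg x⟩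
  · rintro ⟨y, hy⟩
    refine ⟨y, fun k _ => hy.step k, (hy.eq_iff_modEq n 0).2 (by simp [Nat.ModEq]),
      fun k hk l hl h => ((hy.eq_iff_modEq k l).1 h).eq_of_lt_of_lt hk hl⟩

namespace ZMod

theorem gcd_sub_nsmul_mem_zmultiples_sub (n : ℕ) (a b : ℤ) :
    Int.gcd (b - a) n • (a : ZMod n) ∈ zmultiples ((b : ZMod n) - a) := by
  have hgcd :
      ((Int.gcd (b - a) n : ℕ) : ZMod n) = ((b : ZMod n) - a) * Int.gcdA (b - a) n := by
    simpa using congrArg (Int.cast : ℤ → ZMod n) (Int.gcd_eq_gcd_ab (b - a) n)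
  rw [nsmul_eq_mul, hgcd]
  exact ⟨Int.gcdA (b - a) n * a, by simp only [zsmul_eq_mul]; push_cast; ring⟩

theorem dvd_of_zsmul_mem_zmultiples_sub {n : ℕ} {a b : ℤ} (h : Int.gcd (Int.gcd a b) n = 1)
    {z : ℤ} (hz : z • (a : ZMod n) ∈ zmultiples ((b : ZMod n) - a)) :
    (Int.gcd (b - a) n : ℤ) ∣ z := by
  set d := Int.gcd (b - a) n
  have hda : Int.gcd d a = 1 := by
    have hga : (Int.gcd d a : ℤ) ∣ a := Int.gcd_dvd_right _ _
    have hgd : (Int.gcd d a : ℤ) ∣ d := Int.gcd_dvd_left _ _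
    have hgb : (Int.gcd d a : ℤ) ∣ b := by
      simpa using dvd_add hga (hgd.trans (Int.gcd_dvd_left _ _))
    have := Int.dvd_coe_gcd (Int.dvd_coe_gcd hga hgb) (hgd.trans (Int.gcd_dvd_right _ _))
    rw [h] at this
    exact Nat.dvd_one.1 (Int.natCast_dvd_natCast.1 this)
  obtain ⟨k, hk⟩ := hz
  have hn : (n : ℤ) ∣ a * z - (b - a) * k := by
    rw [← ZMod.intCast_zmod_eq_zero_iff_dvd]
    push_cast
    simp only [zsmul_eq_mul] at hk
    linear_combination -hk
  have hd : (d : ℤ) ∣ a * z := by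
    simpa using dvd_add ((Int.gcd_dvd_right (b - a) n).trans hn)
      (dvd_mul_of_dvd_left (Int.gcd_dvd_left (b - a) n) k)
  exact Int.dvd_of_dvd_mul_right_of_gcd_one hd hda

theorem mul_addOrderOf_intCast_eq_iff {n : ℕ} (hn : n ≠ 0) (s : ℤ) (p : ℕ) :
    p * addOrderOf (s : ZMod n) = n ↔ Int.gcd s n = p := by
  have hord : addOrderOf (s : ZMod n) = n / Int.gcd s n := by
    obtain ⟨m, rfl | rfl⟩ := Int.eq_nat_or_neg s <;>
      simp only [Int.cast_neg, addOrderOf_neg, Int.neg_gcd, Int.cast_natCast,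
        ZMod.addOrderOf_coe _ hn, Int.gcd_natCast_natCast, Nat.gcd_comm]
  have hg : Int.gcd s n ∣ n := by simpa using Int.gcd_dvd_natAbs_right s n
  have hpos : 0 < n / Int.gcd s n :=
    Nat.div_pos (Nat.le_of_dvd (Nat.pos_of_ne_zero hn) hg)
      (Int.gcd_pos_of_ne_zero_right _ (by exact_mod_cast hn))
  rw [hord]
  constructor
  · intro hp
    exact (Nat.eq_of_mul_eq_mul_right hpos (hp.trans (Nat.mul_div_cancel' hg).symm)).symm
  · rintro rfl
    exact Nat.mul_div_cancel' hg

end ZMod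

/-- `C⃗(n;a,b)` with `gcd(a,b,n) = 1` is Hamiltonian iff there are nonnegative
integers `i, j` with `i + j = gcd(b−a, n) = gcd(ai + bj, n)`. -/
theorem hamiltonian_iff_rankin (n : ℕ) (hn : 1 ≤ n) (a b : ℤ)
    (h : Int.gcd (Int.gcd a b) n = 1) :
    IsHamiltonianCirculant n a b ↔
      ∃ i j : ℕ, i + j = Int.gcd (b - a) n ∧
        Int.gcd (b - a) n = Int.gcd (a * i + b * j) n := by
  have hn0 : n ≠ 0 := by omega
  have hcast (i j : ℕ) :
      i • (a : ZMod n) + j • (b : ZMod n) = ((a * i + b * j : ℤ) : ZMod n) := by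
    push_cast; simp [nsmul_eq_mul, mul_comm]
  simp_rw [eq_comm (a := Int.gcd (b - a) n), ← ZMod.mul_addOrderOf_intCast_eq_iff hn0, ← hcast,
    isHamiltonianCirculant_iff_exists_isCyclicWalk hn0]
  constructor
  · rintro ⟨y, hy⟩
    have : NeZero n := ⟨hn0⟩
    exact hy.exists_mul_addOrderOf_eq (Nat.card_zmod n)
      (Int.gcd_pos_of_ne_zero_right _ (by exact_mod_cast hn0))
      (by simpa using Int.gcd_dvd_natAbs_right (b - a) n)
      (ZMod.gcd_sub_nsmul_mem_zmultiples_sub n a b)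
  · rintro ⟨i, j, hij, hord⟩
    exact ⟨_, hord ▸ isCyclicWalk_blockWalk hij fun _ => ZMod.dvd_of_zsmul_mem_zmultiples_sub h⟩
end

section
/- Let n ≥ 1 and r ∈ ℤ with 0 ≤ r < n and gcd(r,n) = 1. Let Λ = ℤ·(n,0) + ℤ·(−r,1), and let T be the closed triangle in ℝ² with vertices (0,0), (1,0), (r,n). Then the linear map t(x,y) = (nx − ry, y) restricts to a bijection from T ∩ ℤ² onto Λ ∩ {(x,y) ∈ ℕ² : x + y ≤ n}. -/
/-!
The map `t` is injective and `m • (n, 0) + k • (-r, 1) = t (m, k)`, so `Λ` is exactly the image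
of `ℤ²`. Moreover `t` carries `T` onto the triangle `x, y ≥ 0, x + y ≤ n` with vertices
`(0,0), (n,0), (0,n)`, so `T ∩ ℤ²` is the preimage under `t` of its lattice points.
-/

open Set

lemma convexHull_triangle_subset {n : ℝ} (hn : 0 ≤ n) (r : ℝ) :
    convexHull ℝ {(0, 0), (1, 0), (r, n)} ⊆
      {p : ℝ × ℝ | 0 ≤ p.2 ∧ 0 ≤ n * p.1 - r * p.2 ∧ n * p.1 - r * p.2 + p.2 ≤ n} := by
  refine convexHull_min ?_ ?_
  · rintro p (rfl | rfl | rfl) <;> refine ⟨?_, ?_, ?_⟩ <;> dsimp only <;>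
      linarith [mul_comm r n]
  · rintro p ⟨h1, h2, h3⟩ q ⟨h1', h2', h3'⟩ a b ha hb hab
    simp only [mem_ofPred_eq, Prod.fst_add, Prod.snd_add, Prod.smul_fst, Prod.smul_snd,
      smul_eq_mul]
    refine ⟨by positivity, by nlinarith, by nlinarith⟩

lemma mem_convexHull_triangle_of {n : ℝ} (hn : 0 < n) {r x y : ℝ} (h1 : 0 ≤ y)
    (h2 : 0 ≤ n * x - r * y) (h3 : n * x - r * y + y ≤ n) :
    (x, y) ∈ convexHull ℝ {(0, 0), (1, 0), (r, n)} := by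
  -- barycentric coordinates of `(x, y)`
  have hmem := (convex_convexHull ℝ ({(0, 0), (1, 0), (r, n)} : Set (ℝ × ℝ))).sum_mem
    (t := Finset.univ) (w := ![(n - (n * x - r * y) - y) / n, (n * x - r * y) / n, y / n])
    (z := ![(0, 0), (1, 0), (r, n)])
    (fun i _ => by fin_cases i <;> dsimp <;> apply div_nonneg <;> linarith)
    (by simp [Fin.sum_univ_three]; field_simp; ring)
    (fun i _ => by fin_cases i <;> exact subset_convexHull ℝ _ (by simp))
  convert hmem using 1
  simp only [Fin.sum_univ_three, Matrix.cons_val_zero, Matrix.cons_val_one, Matrix.cons_val,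
    Prod.smul_mk, smul_eq_mul, mul_zero, mul_one, Prod.mk_add_mk, zero_add, Prod.mk.injEq]
  exact ⟨by field_simp; ring, by field_simp⟩

lemma mem_convexHull_triangle_iff {n : ℝ} (hn : 0 < n) (r x y : ℝ) :
    (x, y) ∈ convexHull ℝ {(0, 0), (1, 0), (r, n)} ↔
      0 ≤ y ∧ 0 ≤ n * x - r * y ∧ n * x - r * y + y ≤ n :=
  ⟨fun h => convexHull_triangle_subset hn.le r h, fun ⟨h1, h2, h3⟩ =>
    mem_convexHull_triangle_of hn h1 h2 h3⟩

def shear (n r : ℤ) (p : ℤ × ℤ) : ℤ × ℤ := (n * p.1 - r * p.2, p.2)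

lemma shear_injective {n : ℤ} (hn : n ≠ 0) (r : ℤ) : Function.Injective (shear n r) := by
  rintro ⟨x, y⟩ ⟨x', y'⟩ h
  simp only [shear, Prod.mk.injEq] at h
  obtain ⟨hx, rfl⟩ := h
  simp [mul_left_cancel₀ hn (sub_left_inj.mp hx)]

lemma smul_add_smul_eq_shear (n r m k : ℤ) :
    m • (n, (0 : ℤ)) + k • (-r, (1 : ℤ)) = shear n r (m, k) := by
  simp only [shear, Prod.smul_mk, smul_eq_mul, Prod.mk_add_mk]
  ext <;> simp only <;> ring

theorem triangle_bijOn_lattice_general (n : ℕ) (hn : 1 ≤ n) (r : ℕ) :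
    Set.BijOn (fun p : ℤ × ℤ => ((n : ℤ) * p.1 - (r : ℤ) * p.2, p.2))
      {p : ℤ × ℤ | ((p.1 : ℝ), (p.2 : ℝ)) ∈
        convexHull ℝ ({((0 : ℝ), (0 : ℝ)), ((1 : ℝ), (0 : ℝ)), ((r : ℝ), (n : ℝ))} :
          Set (ℝ × ℝ))}
      {q : ℤ × ℤ | (∃ m k : ℤ, q = m • (((n : ℤ), (0 : ℤ)) : ℤ × ℤ)
          + k • (((-(r : ℤ)), (1 : ℤ)) : ℤ × ℤ)) ∧
        0 ≤ q.1 ∧ 0 ≤ q.2 ∧ q.1 + q.2 ≤ n} := by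
  set S : Set (ℤ × ℤ) := {q | 0 ≤ q.1 ∧ 0 ≤ q.2 ∧ q.1 + q.2 ≤ n}
  have htriangle : {p : ℤ × ℤ | ((p.1 : ℝ), (p.2 : ℝ)) ∈
      convexHull ℝ ({((0 : ℝ), (0 : ℝ)), ((1 : ℝ), (0 : ℝ)), ((r : ℝ), (n : ℝ))} :
        Set (ℝ × ℝ))} = shear n r ⁻¹' S := by
    ext p
    rw [mem_ofPred_eq, mem_convexHull_triangle_iff (by exact_mod_cast hn)]
    simp only [S, shear, mem_preimage, mem_ofPred_eq]
    norm_cast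
    exact and_left_comm
  have hlattice : {q : ℤ × ℤ | (∃ m k : ℤ, q = m • (((n : ℤ), (0 : ℤ)) : ℤ × ℤ)
      + k • (((-(r : ℤ)), (1 : ℤ)) : ℤ × ℤ)) ∧ 0 ≤ q.1 ∧ 0 ≤ q.2 ∧ q.1 + q.2 ≤ n} =
      S ∩ range (shear n r) := by
    ext q
    simp only [S, smul_add_smul_eq_shear, mem_ofPred_eq, mem_inter_iff, mem_range, Prod.exists]
    rw [and_comm]
    simp only [eq_comm]
  rw [htriangle, hlattice, ← image_preimage_eq_inter_range]
  exact (shear_injective (by omega) r).injOn.bijOn_image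

/-- The linear map `t(x,y) = (nx − ry, y)` restricts to a bijection from the integer
points of the closed triangle with vertices `(0,0)`, `(1,0)`, `(r,n)` onto
`Λ ∩ {(x,y) ∈ ℕ² : x + y ≤ n}`, where `Λ = ℤ·(n,0) + ℤ·(−r,1)`. -/
theorem triangle_bijOn_lattice (n : ℕ) (hn : 1 ≤ n) (r : ℕ) (hr : r < n)
    (hcop : Nat.Coprime r n) :
    Set.BijOn (fun p : ℤ × ℤ => ((n : ℤ) * p.1 - (r : ℤ) * p.2, p.2))
      {p : ℤ × ℤ | ((p.1 : ℝ), (p.2 : ℝ)) ∈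
        convexHull ℝ ({((0 : ℝ), (0 : ℝ)), ((1 : ℝ), (0 : ℝ)), ((r : ℝ), (n : ℝ))} :
          Set (ℝ × ℝ))}
      {q : ℤ × ℤ | (∃ m k : ℤ, q = m • (((n : ℤ), (0 : ℤ)) : ℤ × ℤ)
          + k • (((-(r : ℤ)), (1 : ℤ)) : ℤ × ℤ)) ∧
        0 ≤ q.1 ∧ 0 ≤ q.2 ∧ q.1 + q.2 ≤ n} :=
  triangle_bijOn_lattice_general n hn r
end

section
/- Let n ≥ 1 and r with 0 ≤ r < n and gcd(r,n) = 1, and let T be the closed triangle with vertices (0,0), (1,0), (r,n). For each nonzero u = (u₁,u₂) ∈ T ∩ ℤ² with gcd(u₁,u₂) = 1, the point t(u) = (nu₁ − ru₂, u₂) is a nonzero point of Λ = ℤ·(n,0) + ℤ·(−r,1), visible in Λ, with ‖t(u)‖₁ ≤ n = vol(Λ); hence by the lattice-path lemma there is a lattice path from 0 to t(u) whose only pair of distinct nodes congruent mod Λ is (0, t(u)). -/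
private lemma aux_C_zero (U N K X C : ℤ) (hU : 1 ≤ U) (hKN : K ≤ N)
    (h1 : X < K) (h2 : -K < X) (hid : U * X = C * (U * N)) : C = 0 := by
  have hK1 : 1 ≤ K := by linarith
  have hUN : (0 : ℤ) ≤ U * N := mul_nonneg (by linarith) (by linarith)
  rcases lt_trichotomy C 0 with h | h | h
  · have t1 : (0 : ℤ) < U * (X + K) := mul_pos (by linarith) (by linarith)
    have t2 : (0 : ℤ) ≤ U * (N - K) := mul_nonneg (by linarith) (by linarith)
    have t3 : (0 : ℤ) ≤ (-C - 1) * (U * N) := mul_nonneg (by linarith) hUN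
    nlinarith [t1, t2, t3]
  · exact h
  · have t1 : (0 : ℤ) < U * (K - X) := mul_pos (by linarith) (by linarith)
    have t2 : (0 : ℤ) ≤ U * (N - K) := mul_nonneg (by linarith) (by linarith)
    have t3 : (0 : ℤ) ≤ (C - 1) * (U * N) := mul_nonneg (by linarith) hUN
    nlinarith [t1, t2, t3]

set_option maxHeartbeats 2000000 in
/-- For a nonzero integer point `u` of the closed triangle with vertices `(0,0)`,
`(1,0)`, `(r,n)` with coprime coordinates, the point `t(u) = (nu₁ − ru₂, u₂)` is a
nonzero point of `Λ = ℤ·(n,0) + ℤ·(−r,1)`, visible in `Λ`, with `‖t(u)‖₁ ≤ n = vol(Λ)`;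
hence there is a lattice path from `0` to `t(u)` whose only pair of distinct nodes
congruent mod `Λ` is the pair of endpoints. -/
theorem triangle_point_visible_and_path (n : ℕ) (hn : 1 ≤ n) (r : ℕ) (hr : r < n)
    (hcop : Nat.Coprime r n) (u : ℤ × ℤ) (hu0 : u ≠ 0)
    (huT : ((u.1 : ℝ), (u.2 : ℝ)) ∈
      convexHull ℝ ({((0 : ℝ), (0 : ℝ)), ((1 : ℝ), (0 : ℝ)), ((r : ℝ), (n : ℝ))} :
        Set (ℝ × ℝ)))
    (hgcd : Int.gcd u.1 u.2 = 1) :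
    ((n : ℤ) * u.1 - (r : ℤ) * u.2, u.2) ∈
        {q : ℤ × ℤ | ∃ m k : ℤ, q = m • (((n : ℤ), (0 : ℤ)) : ℤ × ℤ)
          + k • (((-(r : ℤ)), (1 : ℤ)) : ℤ × ℤ)} ∧
      ((n : ℤ) * u.1 - (r : ℤ) * u.2, u.2) ≠ (0 : ℤ × ℤ) ∧
      IsVisibleInSet
        {q : ℤ × ℤ | ∃ m k : ℤ, q = m • (((n : ℤ), (0 : ℤ)) : ℤ × ℤ)
          + k • (((-(r : ℤ)), (1 : ℤ)) : ℤ × ℤ)}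
        ((n : ℤ) * u.1 - (r : ℤ) * u.2, u.2) ∧
      ((n : ℤ) * u.1 - (r : ℤ) * u.2) + u.2 ≤ (n : ℤ) ∧
      ∃ (p : ℕ → ℤ × ℤ) (k : ℕ), p 0 = 0 ∧
        p k = ((n : ℤ) * u.1 - (r : ℤ) * u.2, u.2) ∧
        (∀ i < k, p (i + 1) - p i = ((1 : ℤ), (0 : ℤ)) ∨
          p (i + 1) - p i = ((0 : ℤ), (1 : ℤ))) ∧
        (∀ i ≤ k, ∀ j ≤ k, i ≠ j →
          p j - p i ∈ {q : ℤ × ℤ | ∃ m l : ℤ, q = m • (((n : ℤ), (0 : ℤ)) : ℤ × ℤ)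
            + l • (((-(r : ℤ)), (1 : ℤ)) : ℤ × ℤ)} →
          (i = 0 ∧ j = k) ∨ (i = k ∧ j = 0)) := by
  -- ## Extract the real linear inequalities from triangle membership
  have hS : convexHull ℝ ({((0 : ℝ), (0 : ℝ)), ((1 : ℝ), (0 : ℝ)), ((r : ℝ), (n : ℝ))} :
      Set (ℝ × ℝ)) ⊆
      {p : ℝ × ℝ | 0 ≤ (n : ℝ) * p.1 - (r : ℝ) * p.2 ∧ 0 ≤ p.2 ∧
        (n : ℝ) * p.1 - (r : ℝ) * p.2 + p.2 ≤ (n : ℝ)} := by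
    apply convexHull_min
    · rintro p (rfl | rfl | rfl)
      · exact ⟨by norm_num, by norm_num, by norm_num⟩
      · exact ⟨by norm_num, by norm_num, by norm_num⟩
      · exact ⟨by nlinarith, by positivity, by nlinarith⟩
    · intro p hp q hq α β hα hβ hαβ
      obtain ⟨hp1, hp2, hp3⟩ := hp
      obtain ⟨hq1, hq2, hq3⟩ := hq
      simp only [Set.mem_setOf_eq, Prod.fst_add, Prod.snd_add, Prod.smul_fst,
        Prod.smul_snd, smul_eq_mul] at *
      refine ⟨by nlinarith [mul_nonneg hα hp1, mul_nonneg hβ hq1],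
        by nlinarith [mul_nonneg hα hp2, mul_nonneg hβ hq2],
        by nlinarith [mul_le_mul_of_nonneg_left hp3 hα, mul_le_mul_of_nonneg_left hq3 hβ]⟩
  obtain ⟨h1R, h2R, h3R⟩ := hS huT
  simp only [Set.mem_setOf_eq] at h1R h2R h3R
  have ha : 0 ≤ (n : ℤ) * u.1 - (r : ℤ) * u.2 := by exact_mod_cast h1R
  have hb : 0 ≤ u.2 := by exact_mod_cast h2R
  have hab : (n : ℤ) * u.1 - (r : ℤ) * u.2 + u.2 ≤ (n : ℤ) := by exact_mod_cast h3R
  -- abbreviations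
  have hcopint : IsCoprime u.1 u.2 := Int.isCoprime_iff_gcd_eq_one.mpr hgcd
  have hnz : ((n : ℤ) * u.1 - (r : ℤ) * u.2, u.2) ≠ (0 : ℤ × ℤ) := by
    intro h
    have h1 : (n : ℤ) * u.1 - (r : ℤ) * u.2 = 0 := congrArg Prod.fst h
    have h2 : u.2 = 0 := congrArg Prod.snd h
    apply hu0
    have hn' : (n : ℤ) ≠ 0 := Int.natCast_ne_zero.mpr (by omega)
    have hu1 : u.1 = 0 := by
      have hz : (n : ℤ) * u.1 = 0 := by rw [h2] at h1; linarith
      exact (mul_eq_zero.mp hz).resolve_left hn'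
    exact Prod.ext_iff.mpr ⟨hu1, h2⟩
  refine ⟨⟨u.1, u.2, ?_⟩, hnz, ?_, by linarith, ?_⟩
  · simp only [Prod.smul_mk, Prod.mk_add_mk, smul_eq_mul, Prod.mk.injEq]
    constructor <;> ring
  · -- visibility
    rintro d hd w ⟨m, c, rfl⟩ heq
    simp only [Prod.smul_mk, Prod.mk_add_mk, smul_eq_mul, smul_add, Prod.mk.injEq,
      mul_zero, mul_one, add_zero, zero_add, mul_neg, neg_mul] at heq
    obtain ⟨h1, h2⟩ := heq
    have hn' : (n : ℤ) ≠ 0 := Int.natCast_ne_zero.mpr (by omega)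
    have hm : (d : ℤ) * m = u.1 := by
      have hz : (n : ℤ) * ((d : ℤ) * m) = (n : ℤ) * u.1 := by linear_combination h1 + (r : ℤ) * h2
      exact mul_left_cancel₀ hn' hz
    have hdu : IsUnit (d : ℤ) :=
      hcopint.isUnit_of_dvd' ⟨m, hm.symm⟩ ⟨c, h2.symm⟩
    rw [Int.isUnit_iff] at hdu
    omega
  · -- ## the path
    obtain ⟨A, hA⟩ : ∃ A : ℕ, (A : ℤ) = (n : ℤ) * u.1 - (r : ℤ) * u.2 :=
      ⟨((n : ℤ) * u.1 - (r : ℤ) * u.2).toNat, Int.toNat_of_nonneg ha⟩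
    obtain ⟨B, hB⟩ : ∃ B : ℕ, (B : ℤ) = u.2 := ⟨u.2.toNat, Int.toNat_of_nonneg hb⟩
    set k := A + B with hkdef
    have hk1 : 1 ≤ k := by
      rcases Nat.eq_zero_or_pos k with hk | hk
      · exfalso
        have hA0 : A = 0 := by omega
        have hB0 : B = 0 := by omega
        apply hnz
        rw [Prod.ext_iff]
        constructor
        · simp only; rw [← hA, hA0]; rfl
        · simp only; rw [← hB, hB0]; rfl
      · exact hk
    have hkpos : 0 < k := hk1
    have hkposZ : (0 : ℤ) < (k : ℤ) := by exact_mod_cast hkpos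
    have hBk : B ≤ k := by omega
    have hkn : (k : ℤ) ≤ (n : ℤ) := by push_cast [hkdef]; rw [hA, hB]; linarith
    set y : ℕ → ℕ := fun i => B * i / k with hydef
    have hylow : ∀ i, (y i : ℤ) * k ≤ (B : ℤ) * i := by
      intro i
      have h := Nat.div_mul_le_self (B * i) k
      exact_mod_cast h
    have hyhigh : ∀ i, (B : ℤ) * i < (y i : ℤ) * k + k := by
      intro i
      have h1 := Nat.div_add_mod (B * i) k
      have h2 := Nat.mod_lt (B * i) hkpos
      have h1' : (k : ℤ) * (y i : ℤ) + ((B * i) % k : ℕ) = (B : ℤ) * i := by exact_mod_cast h1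
      have h2' : (((B * i) % k : ℕ) : ℤ) < (k : ℤ) := by exact_mod_cast h2
      have h3 : (0 : ℤ) ≤ (((B * i) % k : ℕ) : ℤ) := Int.natCast_nonneg _
      linarith
    have hymono : ∀ {i j : ℕ}, i ≤ j → y i ≤ y j := by
      intro i j hij
      exact Nat.div_le_div_right (Nat.mul_le_mul_left B hij)
    have hyi : ∀ i, y i ≤ i := by
      intro i
      have h1 : B * i ≤ k * i := Nat.mul_le_mul_right i hBk
      calc B * i / k ≤ k * i / k := Nat.div_le_div_right h1
        _ = i := Nat.mul_div_cancel_left i hkpos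
    have hyk : y k = B := by
      show B * k / k = B
      exact Nat.mul_div_cancel B hkpos
    have hystep : ∀ i, y (i + 1) = y i ∨ y (i + 1) = y i + 1 := by
      intro i
      have h1 : y i ≤ y (i + 1) := hymono (Nat.le_succ i)
      have h2 : (y (i + 1) : ℤ) * k ≤ (B : ℤ) * (i + 1) := by
        have := hylow (i + 1); push_cast at this ⊢; linarith
      have h3 : (B : ℤ) * i < (y i : ℤ) * k + k := hyhigh i
      have hBkZ : (B : ℤ) ≤ (k : ℤ) := by exact_mod_cast hBk
      have h4 : (y (i + 1) : ℤ) * k < ((y i : ℤ) + 2) * k := by nlinarith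
      have h5 : (y (i + 1) : ℤ) < (y i : ℤ) + 2 := lt_of_mul_lt_mul_right h4 (le_of_lt hkposZ)
      have h6 : y (i + 1) < y i + 2 := by exact_mod_cast h5
      omega
    set p : ℕ → ℤ × ℤ := fun i => ((i : ℤ) - (y i : ℤ), (y i : ℤ)) with hpdef
    have hsub : ∀ i j : ℕ, p j - p i =
        (((j : ℤ) - (y j : ℤ)) - ((i : ℤ) - (y i : ℤ)), (y j : ℤ) - (y i : ℤ)) :=
      fun i j => rfl
    have hp0 : p 0 = 0 := by
      have : y 0 = 0 := by show B * 0 / k = 0; simp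
      simp [hpdef, this]
    have hpk : p k = ((n : ℤ) * u.1 - (r : ℤ) * u.2, u.2) := by
      rw [Prod.ext_iff]
      constructor
      · show (k : ℤ) - (y k : ℤ) = (n : ℤ) * u.1 - (r : ℤ) * u.2
        rw [hyk, ← hA]; push_cast [hkdef]; ring
      · show (y k : ℤ) = u.2
        rw [hyk, hB]
    have hsteps : ∀ i < k, p (i + 1) - p i = ((1 : ℤ), (0 : ℤ)) ∨
        p (i + 1) - p i = ((0 : ℤ), (1 : ℤ)) := by
      intro i _
      rw [hsub i (i + 1)]
      rcases hystep i with h | h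
      · left
        rw [h, Prod.mk.injEq]
        constructor <;> push_cast <;> ring
      · right
        rw [h, Prod.mk.injEq]
        constructor <;> push_cast <;> ring
    -- the key impossibility lemma
    have key : ∀ i j : ℕ, i < j → j ≤ k → ¬(i = 0 ∧ j = k) →
        ∀ m c : ℤ, p j - p i = m • (((n : ℤ), (0 : ℤ)) : ℤ × ℤ)
          + c • (((-(r : ℤ)), (1 : ℤ)) : ℤ × ℤ) → False := by
      intro i j hij hjk hnot m c heq
      rw [hsub i j] at heq
      simp only [Prod.smul_mk, Prod.mk_add_mk, smul_eq_mul, Prod.mk.injEq, mul_neg,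
        mul_zero, mul_one, zero_add, add_zero] at heq
      obtain ⟨he1, he2⟩ := heq
      rw [← neg_mul] at he1
      set d : ℤ := (j : ℤ) - (i : ℤ) with hddef
      set e : ℤ := (y j : ℤ) - (y i : ℤ) with hedef
      have h2' : m * n = d + ((r : ℤ) - 1) * e := by
        linear_combination (-1 : ℤ) * he1 + (-(r : ℤ)) * he2
      have h1' : u.1 * n = (k : ℤ) + ((r : ℤ) - 1) * (B : ℤ) := by
        push_cast [hkdef]; rw [hA, hB]; ring
      -- trivial case k = 1
      rcases Nat.lt_or_ge k 2 with hk2 | hk2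
      · exact hnot (by omega)
      -- now n ≥ 2 hence r ≥ 1
      have hn2 : 2 ≤ n := by
        have : (2 : ℤ) ≤ (n : ℤ) := le_trans (by exact_mod_cast hk2) hkn
        exact_mod_cast this
      have hr1 : 1 ≤ r := by
        rcases Nat.eq_zero_or_pos r with h0 | h0
        · exfalso; rw [h0] at hcop; have := Nat.coprime_zero_left n |>.mp hcop; omega
        · exact h0
      have hr1Z : (1 : ℤ) ≤ (r : ℤ) := by exact_mod_cast hr1
      have hnZ : (1 : ℤ) ≤ (n : ℤ) := by exact_mod_cast hn
      have hBnn : (0 : ℤ) ≤ (B : ℤ) := Int.natCast_nonneg B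
      -- basic bounds
      have hd1 : 1 ≤ d := by
        have : (i : ℤ) < (j : ℤ) := by exact_mod_cast hij
        omega
      have hdk : d ≤ (k : ℤ) := by
        have : (j : ℤ) ≤ (k : ℤ) := by exact_mod_cast hjk
        have : (0 : ℤ) ≤ (i : ℤ) := Int.natCast_nonneg i
        omega
      have he0 : 0 ≤ e := by
        have : y i ≤ y j := hymono (le_of_lt hij)
        have : (y i : ℤ) ≤ (y j : ℤ) := by exact_mod_cast this
        omega
      have heB : e ≤ (B : ℤ) := by
        have h1 : y j ≤ B := by rw [← hyk]; exact hymono hjk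
        have h2 : (y j : ℤ) ≤ (B : ℤ) := by exact_mod_cast h1
        have h3 : (0 : ℤ) ≤ (y i : ℤ) := Int.natCast_nonneg _
        omega
      -- bound on ke - Bd
      have hbd1 : (k : ℤ) * e - (B : ℤ) * d < k := by
        rw [hedef, hddef]
        linarith [hylow j, hyhigh i]
      have hbd2 : -(k : ℤ) < (k : ℤ) * e - (B : ℤ) * d := by
        rw [hedef, hddef]
        linarith [hyhigh j, hylow i]
      -- d - e ≤ A
      have hAnn : (0 : ℤ) ≤ (A : ℤ) := Int.natCast_nonneg A
      have hAk : (A : ℤ) = (k : ℤ) - (B : ℤ) := by push_cast [hkdef]; ring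
      have hxA : d - e ≤ (A : ℤ) := by
        have hj1 : (j : ℤ) - (y j : ℤ) ≤ (A : ℤ) := by
          have l1 := hyhigh j
          have hjkZ : (j : ℤ) ≤ (k : ℤ) := by exact_mod_cast hjk
          have hAj : (A : ℤ) * j = (k : ℤ) * j - (B : ℤ) * j := by rw [hAk]; ring
          have hAjk : (A : ℤ) * j ≤ (A : ℤ) * k := mul_le_mul_of_nonneg_left hjkZ hAnn
          have step : (k : ℤ) * ((j : ℤ) - (y j : ℤ)) < (k : ℤ) * ((A : ℤ) + 1) := by
            have e1 : (k : ℤ) * ((j : ℤ) - (y j : ℤ)) = (k : ℤ) * j - (y j : ℤ) * k := by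
              ring
            have e2 : (k : ℤ) * ((A : ℤ) + 1) = (A : ℤ) * k + k := by ring
            linarith
          have := lt_of_mul_lt_mul_left step (le_of_lt hkposZ)
          omega
        have hi1 : (0 : ℤ) ≤ (i : ℤ) - (y i : ℤ) := by
          have h := hyi i
          have h2 : (y i : ℤ) ≤ (i : ℤ) := by exact_mod_cast h
          omega
        omega
      -- u.1 ≥ 1
      have hu1 : 1 ≤ u.1 := by
        by_contra hcon
        push_neg at hcon
        have h0 : u.1 * n ≤ 0 := by nlinarith
        have h1 : (0 : ℤ) ≤ ((r : ℤ) - 1) * (B : ℤ) := mul_nonneg (by linarith) hBnn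
        have hk2Z : (2 : ℤ) ≤ (k : ℤ) := by exact_mod_cast hk2
        linarith [h1', h0]
      -- m ≥ 1
      have hm1 : 1 ≤ m := by
        by_contra hcon
        push_neg at hcon
        have h0 : m * n ≤ 0 := by nlinarith
        have h1 : (0 : ℤ) ≤ ((r : ℤ) - 1) * e := mul_nonneg (by linarith) he0
        linarith [h2']
      -- m ≤ u.1
      have hmu : m ≤ u.1 := by
        have h0 : m * n ≤ u.1 * n := by
          have h1 : ((r : ℤ) - 1) * e ≤ ((r : ℤ) - 1) * (B : ℤ) :=
            mul_le_mul_of_nonneg_left heB (by linarith)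
          have h2 : d ≤ (k : ℤ) := hdk
          linarith [h1', h2']
        exact le_of_mul_le_mul_right h0 (by exact_mod_cast Nat.lt_of_lt_of_le Nat.zero_lt_one hn)
      -- m ≠ u.1
      have hmne : m ≠ u.1 := by
        intro hcon
        have h0 : (k : ℤ) - d = ((r : ℤ) - 1) * (e - (B : ℤ)) := by
          rw [hcon] at h2'; linarith [h1', h2']
        have h1 : ((r : ℤ) - 1) * (e - (B : ℤ)) ≤ 0 :=
          mul_nonpos_of_nonneg_of_nonpos (by linarith) (by linarith)
        have hdk' : d = (k : ℤ) := by omega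
        apply hnot
        have hji : (j : ℤ) = (k : ℤ) + (i : ℤ) := by omega
        have hji' : j = k + i := by exact_mod_cast hji
        omega
      -- the key identity
      have hid : u.1 * ((k : ℤ) * e - (B : ℤ) * d) = (u.1 * e - m * (B : ℤ)) * (u.1 * n) := by
        linear_combination (-u.1 * e) * h1' + (u.1 * (B : ℤ)) * h2'
      have hCz : u.1 * e - m * (B : ℤ) = 0 :=
        aux_C_zero u.1 (n : ℤ) (k : ℤ) ((k : ℤ) * e - (B : ℤ) * d) (u.1 * e - m * (B : ℤ))
          hu1 hkn hbd1 hbd2 hid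
      -- coprimality contradiction
      have hcopB : IsCoprime u.1 (B : ℤ) := by rw [hB]; exact hcopint
      have hdvd : u.1 ∣ m := hcopB.dvd_of_dvd_mul_right ⟨e, by linarith⟩
      have : u.1 ≤ m := Int.le_of_dvd (by omega) hdvd
      omega
    refine ⟨p, k, hp0, hpk, hsteps, ?_⟩
    intro i hi j hj hij hmem
    obtain ⟨m, c, hmc⟩ := hmem
    rcases Nat.lt_or_ge i j with h | h
    · by_cases hcase : i = 0 ∧ j = k
      · exact Or.inl hcase
      · exact (key i j h hj hcase m c hmc).elim
    · have h' : j < i := by omega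
      by_cases hcase : j = 0 ∧ i = k
      · exact Or.inr ⟨hcase.2, hcase.1⟩
      · exfalso
        apply key j i h' hi hcase (-m) (-c)
        rw [← neg_sub (p j) (p i), hmc, neg_add, ← neg_smul, ← neg_smul]
end

section
/- Discrete chord lemma: let d ≥ 2 and m ≥ 1 be integers, L = dm, and let (n_i)_{i=0}^{L} be a sequence of integers with n_0 = 0, n_L = N, and n_{i+1} − n_i ∈ {0,1} for all i. If d divides N, then there exists an index i with 0 ≤ i ≤ L − m such that n_{i+m} − n_i = N/d. -/
/-- Discrete intermediate value theorem for integer sequences with steps of size ≤ 1. -/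
lemma ivt_aux_s15 (f : ℕ → ℤ) (a : ℕ) : ∀ b, a ≤ b →
    (∀ i, a ≤ i → i < b → f (i + 1) - f i ≤ 1 ∧ f i - f (i + 1) ≤ 1) →
    f a ≤ 0 → 0 ≤ f b → ∃ i, a ≤ i ∧ i ≤ b ∧ f i = 0 := by
  intro b
  induction b with
  | zero =>
    intro hab _ hfa hfb
    interval_cases a
    exact ⟨0, le_refl _, le_refl _, le_antisymm hfa hfb⟩
  | succ b ih =>
    intro hab hstep hfa hfb
    rcases Nat.lt_or_ge a (b + 1) with h | h
    · have hab' : a ≤ b := Nat.lt_succ_iff.mp h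
      rcases le_or_gt 0 (f b) with hb0 | hb0
      · obtain ⟨i, hi1, hi2, hi3⟩ := ih hab'
          (fun i h1 h2 => hstep i h1 (Nat.lt_succ_of_lt h2)) hfa hb0
        exact ⟨i, hi1, Nat.le_succ_of_le hi2, hi3⟩
      · have h1 := (hstep b hab' (Nat.lt_succ_self b)).1
        have : f (b + 1) = 0 := by omega
        exact ⟨b + 1, hab, le_refl _, this⟩
    · have : a = b + 1 := le_antisymm hab h
      subst this
      exact ⟨b + 1, le_refl _, le_refl _, le_antisymm hfa hfb⟩

/-- Discrete chord lemma: if `(n_i)_{i=0}^{dm}` is an integer sequence with `n 0 = 0`,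
`n (dm) = N`, consecutive differences in `{0,1}`, and `d ∣ N`, then some subinterval of
length `m` has increment exactly `N/d`. -/
theorem discrete_chord (d m : ℕ) (hd : 2 ≤ d) (hm : 1 ≤ m) (L : ℕ) (hL : L = d * m)
    (n : ℕ → ℤ) (N : ℤ) (h0 : n 0 = 0) (hN : n L = N)
    (hstep : ∀ i < L, n (i + 1) - n i = 0 ∨ n (i + 1) - n i = 1)
    (hdvd : (d : ℤ) ∣ N) :
    ∃ i, i + m ≤ L ∧ n (i + m) - n i = N / d := by
  obtain ⟨c, hc⟩ := hdvd
  have hd0 : (d : ℤ) ≠ 0 := by positivity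
  have hNc : N / d = c := by rw [hc, Int.mul_ediv_cancel_left _ hd0]
  set g : ℕ → ℤ := fun i => n (i + m) - n i - c with hg
  -- telescoping sum
  have hsum : ∑ j ∈ Finset.range d, g (j * m) = 0 := by
    have ht : ∑ j ∈ Finset.range d, (n ((j + 1) * m) - n (j * m)) = N := by
      rw [Finset.sum_range_sub (fun j => n (j * m))]
      simp [hL ▸ hN, h0]
    have : ∑ j ∈ Finset.range d, g (j * m)
        = (∑ j ∈ Finset.range d, (n ((j + 1) * m) - n (j * m))) - d * c := by
      rw [Finset.sum_sub_distrib]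
      congr 1
      · apply Finset.sum_congr rfl
        intro j _
        simp [hg, add_mul, one_mul, add_comm]
      · simp [mul_comm]
    rw [this, ht, ← hc]; ring
  -- there is a nonneg value and a nonpos value among g (j*m), j < d
  have hne : (Finset.range d).Nonempty := ⟨0, Finset.mem_range.mpr (by omega)⟩
  have hex_ge : ∃ j < d, 0 ≤ g (j * m) := by
    by_contra hcon
    push_neg at hcon
    have : ∑ j ∈ Finset.range d, g (j * m) < 0 :=
      Finset.sum_neg (fun j hj => hcon j (Finset.mem_range.mp hj)) hne
    omega
  have hex_le : ∃ j < d, g (j * m) ≤ 0 := by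
    by_contra hcon
    push_neg at hcon
    have : 0 < ∑ j ∈ Finset.range d, g (j * m) :=
      Finset.sum_pos (fun j hj => hcon j (Finset.mem_range.mp hj)) hne
    omega
  obtain ⟨j2, hj2, hg2⟩ := hex_ge
  obtain ⟨j1, hj1, hg1⟩ := hex_le
  -- step bound for g
  have hgstep : ∀ i, i + 1 + m ≤ L → g (i + 1) - g i ≤ 1 ∧ g i - g (i + 1) ≤ 1 := by
    intro i hi
    have h1 := hstep (i + m) (by omega)
    have h2 := hstep i (by omega)
    have hrw : i + m + 1 = i + 1 + m := by ring
    rw [hrw] at h1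
    simp only [hg]
    omega
  have hjb : ∀ j, j < d → j * m + m ≤ L := by
    intro j hj
    have : j * m + m ≤ (d - 1) * m + m := by
      have : j ≤ d - 1 := by omega
      nlinarith
    have : (d - 1) * m + m = d * m := by
      cases d with
      | zero => omega
      | succ k => simp [Nat.succ_sub_one]; ring
    omega
  have key : ∃ i, i + m ≤ L ∧ g i = 0 := by
    rcases le_or_gt (j1 * m) (j2 * m) with hle | hlt
    · obtain ⟨i, _, hi2, hi3⟩ := ivt_aux_s15 g (j1 * m) (j2 * m) hle
        (fun i _ h2 => hgstep i (by have := hjb j2 hj2; omega)) hg1 hg2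
      exact ⟨i, by have := hjb j2 hj2; omega, hi3⟩
    · obtain ⟨i, _, hi2, hi3⟩ := ivt_aux_s15 (fun i => -g i) (j2 * m) (j1 * m) hlt.le
        (fun i _ h2 => by
          have := hgstep i (by have := hjb j1 hj1; omega)
          constructor <;> simp <;> omega)
        (by simpa using hg2) (by simpa using hg1)
      exact ⟨i, by have := hjb j1 hj1; omega, by simpa using hi3⟩
  obtain ⟨i, hi1, hi2⟩ := key
  exact ⟨i, hi1, by simp only [hg] at hi2; omega⟩
end

section
/- For integers v₁, v₂ ≥ 0 not both zero, define the diagonal path p_i, for 0 ≤ i ≤ v₁+v₂, as the integer point on the line x+y = i nearest (with ties broken toward larger first coordinate) to the intersection of that line with the segment from (0,0) to (v₁,v₂). Then p is a lattice path: p_0 = (0,0), p_{v₁+v₂} = (v₁,v₂), and p_{i+1} − p_i ∈ {(1,0),(0,1)} for all i. -/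
/-- The diagonal path towards `(v₁, v₂)`: the `i`-th node is the integer point on the
diagonal `{x + y = i}` nearest to the intersection of that diagonal with the segment
from `(0,0)` to `(v₁,v₂)` (ties broken toward the larger first coordinate); its first
coordinate is `⌊i·v₁/(v₁+v₂) + 1/2⌋ = (2·i·v₁ + (v₁+v₂)) / (2·(v₁+v₂))`. -/
def diagPath (v₁ v₂ i : ℕ) : ℤ × ℤ :=
  (((2 * i * v₁ + (v₁ + v₂)) / (2 * (v₁ + v₂)) : ℕ),
    (i : ℤ) - ((2 * i * v₁ + (v₁ + v₂)) / (2 * (v₁ + v₂)) : ℕ))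

/-- The diagonal path is a lattice path from `(0,0)` to `(v₁,v₂)`: each consecutive
difference is `(1,0)` or `(0,1)`. -/
theorem diagPath_isLatticePath (v₁ v₂ : ℕ) (h : v₁ + v₂ ≠ 0) :
    diagPath v₁ v₂ 0 = (0, 0) ∧
    diagPath v₁ v₂ (v₁ + v₂) = ((v₁ : ℤ), (v₂ : ℤ)) ∧
    ∀ i < v₁ + v₂, diagPath v₁ v₂ (i + 1) - diagPath v₁ v₂ i = ((1 : ℤ), (0 : ℤ)) ∨
      diagPath v₁ v₂ (i + 1) - diagPath v₁ v₂ i = ((0 : ℤ), (1 : ℤ)) := by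
  have hs : 0 < v₁ + v₂ := Nat.pos_of_ne_zero h
  have h2s : 0 < 2 * (v₁ + v₂) := by omega
  refine ⟨?_, ?_, ?_⟩
  · have h0 : (2 * 0 * v₁ + (v₁ + v₂)) / (2 * (v₁ + v₂)) = 0 :=
      Nat.div_eq_of_lt (by omega)
    unfold diagPath
    rw [h0]
    simp
  · have h1 : (2 * (v₁ + v₂) * v₁ + (v₁ + v₂)) / (2 * (v₁ + v₂)) = v₁ := by
      rw [Nat.mul_add_div h2s, Nat.div_eq_of_lt (by omega)]; omega
    unfold diagPath
    rw [h1, Prod.mk.injEq]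
    refine ⟨rfl, ?_⟩
    push_cast
    omega
  · intro i hi
    set a := 2 * i * v₁ + (v₁ + v₂) with ha
    have hnum : 2 * (i + 1) * v₁ + (v₁ + v₂) = a + 2 * v₁ := by ring
    have hle : a / (2 * (v₁ + v₂)) ≤ (a + 2 * v₁) / (2 * (v₁ + v₂)) :=
      Nat.div_le_div_right (by omega)
    have hub : (a + 2 * v₁) / (2 * (v₁ + v₂)) ≤ a / (2 * (v₁ + v₂)) + 1 := by
      calc (a + 2 * v₁) / (2 * (v₁ + v₂)) ≤ (a + 2 * (v₁ + v₂)) / (2 * (v₁ + v₂)) :=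
            Nat.div_le_div_right (by omega)
        _ = a / (2 * (v₁ + v₂)) + 1 := Nat.add_div_right a h2s
    unfold diagPath
    rw [hnum]
    rcases Nat.lt_or_ge (a / (2 * (v₁ + v₂))) ((a + 2 * v₁) / (2 * (v₁ + v₂))) with hc | hc
    · left
      have heq : (a + 2 * v₁) / (2 * (v₁ + v₂)) = a / (2 * (v₁ + v₂)) + 1 := by omega
      rw [heq, Prod.mk_sub_mk, Prod.mk.injEq]
      generalize a / (2 * (v₁ + v₂)) = b
      constructor <;> (push_cast; ring)
    · right
      have heq : (a + 2 * v₁) / (2 * (v₁ + v₂)) = a / (2 * (v₁ + v₂)) := by omega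
      rw [heq, Prod.mk_sub_mk, Prod.mk.injEq]
      generalize a / (2 * (v₁ + v₂)) = b
      constructor <;> (push_cast; ring)
end

section
/- Let Λ ⊆ ℤ² be a rank-2 sublattice, v ∈ Λ ∩ ℕ² visible in Λ with ‖v‖₁ ≤ vol(Λ), and let p be the diagonal lattice path from 0 to v (each node being the integer point on its diagonal nearest to the segment [0,v], ties broken toward larger first coordinate). If 0 ≤ i < j ≤ ‖v‖₁ with (i,j) ≠ (0,‖v‖₁) and p_j − p_i ∈ Λ, then p_j − p_i and v are linearly independent over ℚ. -/
/-- If `v` is visible in `Λ` with `‖v‖₁ ≤ vol(Λ)` and `p_j − p_i ∈ Λ` for a pair of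
diagonal-path nodes other than the endpoints, then `p_j − p_i` and `v` are linearly
independent over `ℚ` (their determinant is nonzero). -/
theorem diagPath_selfCongruence_not_parallel (Λ : AddSubgroup (ℤ × ℤ))
    (hΛ : Λ.index ≠ 0) (v₁ v₂ : ℕ) (hv0 : v₁ + v₂ ≠ 0)
    (hvΛ : ((v₁ : ℤ), (v₂ : ℤ)) ∈ Λ) (hvis : IsVisibleIn Λ ((v₁ : ℤ), (v₂ : ℤ)))
    (hlen : v₁ + v₂ ≤ Λ.index)
    (i j : ℕ) (hij : i < j) (hj : j ≤ v₁ + v₂) (hne : ¬(i = 0 ∧ j = v₁ + v₂))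
    (hmem : diagPath v₁ v₂ j - diagPath v₁ v₂ i ∈ Λ) :
    (diagPath v₁ v₂ j - diagPath v₁ v₂ i).1 * (v₂ : ℤ) ≠
      (diagPath v₁ v₂ j - diagPath v₁ v₂ i).2 * (v₁ : ℤ) := by
  intro h
  set w : ℤ × ℤ := diagPath v₁ v₂ j - diagPath v₁ v₂ i with hw
  -- the coordinates of a path node sum to its index
  have hsum : w.1 + w.2 = (j : ℤ) - (i : ℤ) := by
    simp only [hw, diagPath, Prod.fst_sub, Prod.snd_sub]
    ring
  set m : ℕ := j - i with hmdef
  have hmpos : 0 < m := Nat.sub_pos_of_lt hij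
  have hmlt : m < v₁ + v₂ := by
    rcases lt_or_eq_of_le hj with hlt | heq
    · omega
    · have : i ≠ 0 := by
        intro hi0; exact hne ⟨hi0, heq⟩
      omega
  have hsum' : w.1 + w.2 = (m : ℤ) := by
    rw [hsum]; push_cast [hmdef]; omega
  set n : ℕ := v₁ + v₂ with hndef
  have h1 : (n : ℤ) * w.1 = (m : ℤ) * (v₁ : ℤ) := by
    push_cast [hndef]
    linear_combination h + (v₁ : ℤ) * hsum'
  have h2 : (n : ℤ) * w.2 = (m : ℤ) * (v₂ : ℤ) := by
    push_cast [hndef]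
    linear_combination -h + (v₂ : ℤ) * hsum'
  -- divide by the gcd
  set g : ℕ := Nat.gcd m n with hgdef
  have hgpos : 0 < g := Nat.gcd_pos_of_pos_left _ hmpos
  set m' : ℕ := m / g with hm'def
  set n' : ℕ := n / g with hn'def
  have hmeq : m = g * m' := (Nat.div_mul_cancel (Nat.gcd_dvd_left m n)).symm.trans (Nat.mul_comm _ _)
  have hneq : n = g * n' := (Nat.div_mul_cancel (Nat.gcd_dvd_right m n)).symm.trans (Nat.mul_comm _ _)
  have hgm : g ≤ m := Nat.le_of_dvd hmpos (Nat.gcd_dvd_left m n)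
  have hnpos : 0 < n := by rw [hndef]; omega
  have hn'2 : 2 ≤ n' := by
    by_contra h'
    push_neg at h'
    interval_cases n' <;> simp at hneq <;> omega
  have hcop : Nat.Coprime m' n' := Nat.coprime_div_gcd_div_gcd hgpos
  have hg0 : (g : ℤ) ≠ 0 := by exact_mod_cast hgpos.ne'
  have h1' : (n' : ℤ) * w.1 = (m' : ℤ) * (v₁ : ℤ) := by
    have := h1
    rw [hneq, hmeq] at this
    push_cast at this
    exact mul_left_cancel₀ hg0 (by linear_combination this)
  have h2' : (n' : ℤ) * w.2 = (m' : ℤ) * (v₂ : ℤ) := by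
    have := h2
    rw [hneq, hmeq] at this
    push_cast at this
    exact mul_left_cancel₀ hg0 (by linear_combination this)
  -- Bezout
  have hic : IsCoprime (m' : ℤ) (n' : ℤ) := by
    rw [Int.isCoprime_iff_gcd_eq_one, Int.gcd_natCast_natCast]
    exact hcop
  obtain ⟨a, b, hab⟩ := hic
  set u : ℤ × ℤ := a • w + b • ((v₁ : ℤ), (v₂ : ℤ)) with hu
  have humem : u ∈ Λ := Λ.add_mem (Λ.zsmul_mem hmem a) (Λ.zsmul_mem hvΛ b)
  apply hvis n' hn'2 u humem
  have hu1 : u.1 = a * w.1 + b * (v₁ : ℤ) := by simp [hu]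
  have hu2 : u.2 = a * w.2 + b * (v₂ : ℤ) := by simp [hu]
  apply Prod.ext
  · show (n' : ℤ) * u.1 = (v₁ : ℤ)
    rw [hu1]
    linear_combination a * h1' + (v₁ : ℤ) * hab
  · show (n' : ℤ) * u.2 = (v₂ : ℤ)
    rw [hu2]
    linear_combination a * h2' + (v₂ : ℤ) * hab
end

section
/- Let n ≥ 1 and a, b ∈ ℤ with gcd(a,b,n) = 1, and let Λ = {(u,v) ∈ ℤ² : au + bv ≡ 0 (mod n)}. A Hamiltonian circuit of C⃗(n;a,b) corresponds to a lattice path in ℕ² from (0,0) to some point w ∈ Λ with ‖w‖₁ = n, visiting n+1 points whose labels au+bv mod n are pairwise distinct except that the endpoints both have label 0. In particular, if C⃗(n;a,b) is Hamiltonian then there exists w ∈ Λ ∩ ℕ² with ‖w‖₁ = n and w visible in Λ. -/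
lemma ivt_aux_s19 (f : ℕ → ℤ) (hf : ∀ k, f (k+1) ≤ f k + 1) (t : ℤ) :
    ∀ N i j, j ≤ i + N → i ≤ j → f i ≤ t → t ≤ f j →
      ∃ k, i ≤ k ∧ k ≤ j ∧ f k = t := by
  intro N
  induction N with
  | zero =>
    intro i j h1 h2 h3 h4
    have hij : i = j := by omega
    exact ⟨i, le_rfl, le_of_eq hij, le_antisymm h3 (hij ▸ h4)⟩
  | succ N ih =>
    intro i j h1 h2 h3 h4
    rcases eq_or_lt_of_le h2 with he | hlt
    · exact ⟨i, le_rfl, h2, le_antisymm h3 (he ▸ h4)⟩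
    · by_cases hc : f (i+1) ≤ t
      · obtain ⟨k, hk1, hk2, hk3⟩ := ih (i+1) j (by omega) (by omega) hc h4
        exact ⟨k, by omega, hk2, hk3⟩
      · exact ⟨i, le_rfl, h2, by have := hf i; omega⟩

lemma sum_shift (g : ℕ → ℤ) (m : ℕ) :
    ∀ N, ∑ i ∈ Finset.range N, (g (i+m) - g i)
        = ∑ i ∈ Finset.range m, (g (N+i) - g i) := by
  intro N
  induction N with
  | zero => simp
  | succ N ih =>
    rw [Finset.sum_range_succ, ih]
    have h1 : ∑ i ∈ Finset.range m, (g (N+1+i) - g i)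
        = ∑ i ∈ Finset.range m, (((fun j => g (N+j)) (i+1) - (fun j => g (N+j)) i)
            + (g (N+i) - g i)) := by
      apply Finset.sum_congr rfl
      intro i _
      simp only []
      have e : N+1+i = N+(i+1) := by omega
      rw [e]; ring
    rw [h1, Finset.sum_add_distrib, Finset.sum_range_sub (fun j => g (N+j))]
    simp only [Nat.add_zero]
    ring

/-- A Hamiltonian circuit of `C⃗(n;a,b)` yields a lattice path in `ℕ²` from `(0,0)` to
a point `w ∈ Λ` with `‖w‖₁ = n` whose node labels `au + bv (mod n)` are pairwise
distinct except at the two endpoints; in particular `w` is visible in `Λ`. -/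
theorem hamiltonian_gives_visible_point (n : ℕ) (hn : 1 ≤ n) (a b : ℤ)
    (h : Int.gcd (Int.gcd a b) n = 1) (hham : IsHamiltonianCirculant n a b) :
    ∃ p : ℕ → ℤ × ℤ, p 0 = 0 ∧
      (∀ i < n, p (i + 1) - p i = ((1 : ℤ), (0 : ℤ)) ∨
        p (i + 1) - p i = ((0 : ℤ), (1 : ℤ))) ∧
      p n ∈ circLat n a b ∧ (p n).1 + (p n).2 = n ∧
      (∀ i j, i < j → j ≤ n →
        ((a * (p i).1 + b * (p i).2 : ℤ) : ZMod n) =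
          ((a * (p j).1 + b * (p j).2 : ℤ) : ZMod n) → i = 0 ∧ j = n) ∧
      IsVisibleInSet (circLat n a b) (p n) := by
  classical
  obtain ⟨x, hstep, hclose, hinj⟩ := hham
  set st : ℕ → ℤ × ℤ :=
    fun i => if x (i % n + 1) = x (i % n) + (a : ZMod n) then (1, 0) else (0, 1) with hstdef
  set p : ℕ → ℤ × ℤ := fun k => ∑ i ∈ Finset.range k, st i with hpdef
  have hp0 : p 0 = 0 := by simp [hpdef]
  have hpsucc : ∀ k, p (k+1) = p k + st k := by
    intro k; simp [hpdef, Finset.sum_range_succ]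
  have hstcases : ∀ i, st i = (1,0) ∨ st i = (0,1) := by
    intro i
    by_cases hc : x (i % n + 1) = x (i % n) + (a : ZMod n) <;> simp [hstdef, hc]
  have hsum : ∀ k, (p k).1 + (p k).2 = k := by
    intro k; induction k with
    | zero => simp [hp0]
    | succ k ih =>
      rcases hstcases k with hc | hc <;>
        · rw [hpsucc k, hc]
          push_cast
          simp only [Prod.fst_add, Prod.snd_add]
          omega
  have hstper : ∀ k, st (k + n) = st k := by
    intro k
    simp [hstdef, Nat.add_mod_right]
  have hper : ∀ k, p (k + n) = p n + p k := by
    intro k; induction k with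
    | zero => simp [hp0]
    | succ k ih =>
      have e : k + 1 + n = (k + n) + 1 := by omega
      rw [e, hpsucc, ih, hstper, hpsucc]
      ring
  have hL : ∀ i, i ≤ n → ((a * (p i).1 + b * (p i).2 : ℤ) : ZMod n) = x i - x 0 := by
    intro i
    induction i with
    | zero => intro _; simp [hp0]
    | succ i ih =>
      intro hi1
      have hi : i < n := by omega
      have hmod : i % n = i := Nat.mod_eq_of_lt hi
      have ihh := ih (le_of_lt hi)
      by_cases hc : x (i + 1) = x i + (a : ZMod n)
      · have hsti : st i = (1,0) := by
          show (if x (i % n + 1) = x (i % n) + (a : ZMod n) then ((1:ℤ),(0:ℤ)) else (0,1)) = (1,0)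
          rw [hmod, if_pos hc]
        rw [hpsucc, hsti, hc]
        simp only [Prod.fst_add, Prod.snd_add]
        push_cast at ihh ⊢
        linear_combination ihh
      · have hcb : x (i + 1) = x i + (b : ZMod n) := (hstep i hi).resolve_left hc
        have hsti : st i = (0,1) := by
          show (if x (i % n + 1) = x (i % n) + (a : ZMod n) then ((1:ℤ),(0:ℤ)) else (0,1)) = (0,1)
          rw [hmod, if_neg hc]
        rw [hpsucc, hsti, hcb]
        simp only [Prod.fst_add, Prod.snd_add]
        push_cast at ihh ⊢
        linear_combination ihh
  have hLn : ((a * (p n).1 + b * (p n).2 : ℤ) : ZMod n) = 0 := by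
    rw [hL n le_rfl, hclose, sub_self]
  have hmem : p n ∈ circLat n a b :=
    (ZMod.intCast_zmod_eq_zero_iff_dvd _ n).mp hLn
  have hLper : ∀ i, ((a * (p (i + n)).1 + b * (p (i + n)).2 : ℤ) : ZMod n)
      = ((a * (p i).1 + b * (p i).2 : ℤ) : ZMod n) := by
    intro i
    rw [hper i]
    have e : a * (p n + p i).1 + b * (p n + p i).2
        = (a * (p n).1 + b * (p n).2) + (a * (p i).1 + b * (p i).2) := by
      simp only [Prod.fst_add, Prod.snd_add]; ring
    rw [e, Int.cast_add, hLn, zero_add]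
  have hLmod : ∀ q i, ((a * (p (i + n * q)).1 + b * (p (i + n * q)).2 : ℤ) : ZMod n)
      = ((a * (p i).1 + b * (p i).2 : ℤ) : ZMod n) := by
    intro q
    induction q with
    | zero => intro i; simp
    | succ q ih =>
      intro i
      have e : i + n * (q + 1) = (i + n * q) + n := by ring
      rw [e, hLper, ih]
  refine ⟨p, hp0, ?_, hmem, hsum n, ?_, ?_⟩
  · intro i _
    rcases hstcases i with hc | hc
    · left; rw [hpsucc, hc]; ring
    · right; rw [hpsucc, hc]; ring
  · -- distinctness
    intro i j hij hjn heq
    have hin : i < n := lt_of_lt_of_le hij hjn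
    rcases lt_or_eq_of_le hjn with hjlt | hje
    · exfalso
      have hx : x i = x j := by
        have h1 := hL i (le_of_lt hin)
        have h2 := hL j (le_of_lt hjlt)
        rw [h1, h2] at heq
        exact sub_left_injective heq
      exact absurd (hinj i hin j hjlt hx) (Nat.ne_of_lt hij)
    · have hx : x i = x 0 := by
        have h1 := hL i (le_of_lt hin)
        have h2 := hL j (le_of_eq hje)
        have h3 : x j = x 0 := by rw [hje, hclose]
        rw [h1, h2, h3, sub_self] at heq
        rwa [sub_eq_zero] at heq
      exact ⟨hinj i hin 0 (by omega) hx, hje⟩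
  · -- visibility
    intro d hd w hw heq
    have hn0 : (0:ℤ) < (n:ℤ) := by exact_mod_cast hn
    have hd0 : (0:ℤ) < (d:ℤ) := by exact_mod_cast (by omega : 0 < d)
    have hd1 : (d:ℤ) * w.1 = (p n).1 := by
      rw [← heq]; simp [Prod.smul_fst, smul_eq_mul]
    have hd2 : (d:ℤ) * w.2 = (p n).2 := by
      rw [← heq]; simp [Prod.smul_snd, smul_eq_mul]
    have hM : (d:ℤ) * (w.1 + w.2) = n := by
      rw [mul_add, hd1, hd2, hsum n]
    have hMpos : 0 < w.1 + w.2 := by nlinarith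
    set m : ℕ := (w.1 + w.2).toNat with hmdef
    have hmz : (m:ℤ) = w.1 + w.2 := Int.toNat_of_nonneg hMpos.le
    have hdm : d * m = n := by
      have : ((d * m : ℕ) : ℤ) = (n : ℤ) := by push_cast; rw [hmz, hM]
      exact_mod_cast this
    have hm1 : 1 ≤ m := by
      rcases Nat.eq_zero_or_pos m with h0 | h0
      · exfalso; rw [h0, Nat.mul_zero] at hdm; omega
      · exact h0
    have hmn : m < n := by
      have h2m : 2 * m ≤ d * m := Nat.mul_le_mul_right m hd
      omega
    -- step bound for α i = (p (i+m)).1 - (p i).1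
    have hst01 : ∀ i, (st i).1 = 0 ∨ (st i).1 = 1 := by
      intro i; rcases hstcases i with hc | hc <;> simp [hc]
    have hαstep : ∀ k, ((p (k+1+m)).1 - (p (k+1)).1) ≤ ((p (k+m)).1 - (p k).1) + 1
        ∧ ((p (k+m)).1 - (p k).1) ≤ ((p (k+1+m)).1 - (p (k+1)).1) + 1 := by
      intro k
      have e : k + 1 + m = (k + m) + 1 := by omega
      rw [e, hpsucc (k+m), hpsucc k]
      simp only [Prod.fst_add]
      rcases hst01 (k+m) with h1 | h1 <;> rcases hst01 k with h2 | h2 <;>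
        rw [h1, h2] <;> omega
    have hSum : ∑ i ∈ Finset.range n, ((p (i+m)).1 - (p i).1) = (n:ℤ) * w.1 := by
      rw [sum_shift (fun i => (p i).1) m n]
      have e : ∀ i ∈ Finset.range m, ((p (n+i)).1 - (p i).1 : ℤ) = (p n).1 := by
        intro i _
        have : n + i = i + n := by omega
        rw [this, hper i]
        simp only [Prod.fst_add]; ring
      rw [Finset.sum_congr rfl e, Finset.sum_const, Finset.card_range, nsmul_eq_mul,
        ← hd1]
      push_cast [← hdm]
      ring
    -- find low and high indices
    have hlow : ∃ i, i < n ∧ (p (i+m)).1 - (p i).1 ≤ w.1 := by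
      by_contra hcon
      push_neg at hcon
      have hle : ∀ i ∈ Finset.range n, w.1 + 1 ≤ (p (i+m)).1 - (p i).1 := by
        intro i hi
        have := hcon i (Finset.mem_range.mp hi)
        omega
      have := Finset.card_nsmul_le_sum (Finset.range n) _ _ hle
      rw [Finset.card_range, nsmul_eq_mul, hSum] at this
      nlinarith
    have hhigh : ∃ j, j < n ∧ w.1 ≤ (p (j+m)).1 - (p j).1 := by
      by_contra hcon
      push_neg at hcon
      have hle : ∀ i ∈ Finset.range n, (p (i+m)).1 - (p i).1 ≤ w.1 - 1 := by
        intro i hi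
        have := hcon i (Finset.mem_range.mp hi)
        omega
      have := Finset.sum_le_card_nsmul (Finset.range n) _ _ hle
      rw [Finset.card_range, nsmul_eq_mul, hSum] at this
      nlinarith
    obtain ⟨i, hiN, hilow⟩ := hlow
    obtain ⟨j, hjN, hjhigh⟩ := hhigh
    have hex : ∃ k, k < n ∧ (p (k+m)).1 - (p k).1 = w.1 := by
      rcases le_total i j with hle | hle
      · obtain ⟨k, hk1, hk2, hk3⟩ := ivt_aux_s19 (fun k => (p (k+m)).1 - (p k).1)
          (fun k => (hαstep k).1) w.1 j i j (by omega) hle hilow hjhigh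
        exact ⟨k, by omega, hk3⟩
      · have hfj : (p j).1 - (p (j+m)).1 ≤ -w.1 := by omega
        have hfi : -w.1 ≤ (p i).1 - (p (i+m)).1 := by omega
        obtain ⟨k, hk1, hk2, hk3⟩ := ivt_aux_s19 (fun k => (p k).1 - (p (k+m)).1)
          (fun k => show (p (k+1)).1 - (p (k+1+m)).1 ≤ (p k).1 - (p (k+m)).1 + 1 from by
            have := (hαstep k).2; omega) (-w.1) i j i (by omega) hle hfj hfi
        have hk3' : (p k).1 - (p (k+m)).1 = -w.1 := hk3
        exact ⟨k, by omega, by omega⟩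
    obtain ⟨k, hkn, hkα⟩ := hex
    have hw2 : (p (k+m)).2 - (p k).2 = w.2 := by
      have h1 := hsum (k+m)
      have h2 := hsum k
      push_cast at h1
      omega
    have hLkm : ((a * (p (k+m)).1 + b * (p (k+m)).2 : ℤ) : ZMod n)
        = ((a * (p k).1 + b * (p k).2 : ℤ) : ZMod n) := by
      have hdvd : (n:ℤ) ∣ a * w.1 + b * w.2 := hw
      have e : a * (p (k+m)).1 + b * (p (k+m)).2
          = (a * (p k).1 + b * (p k).2) + (a * w.1 + b * w.2) := by
        have e1 : (p (k+m)).1 = (p k).1 + w.1 := by omega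
        have e2 : (p (k+m)).2 = (p k).2 + w.2 := by omega
        rw [e1, e2]; ring
      rw [e, Int.cast_add, (ZMod.intCast_zmod_eq_zero_iff_dvd _ n).mpr hdvd, add_zero]
    set k' : ℕ := (k + m) % n with hk'def
    have hk'n : k' < n := Nat.mod_lt _ (by omega)
    have hqe : k' + n * ((k + m) / n) = k + m := by
      have := Nat.div_add_mod (k + m) n
      omega
    have hLk' : ((a * (p k').1 + b * (p k').2 : ℤ) : ZMod n)
        = ((a * (p k).1 + b * (p k).2 : ℤ) : ZMod n) := by
      rw [← hLkm, ← hqe, hLmod]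
    have hxeq : x k' = x k := by
      have h1 := hL k' (le_of_lt hk'n)
      have h2 := hL k (le_of_lt hkn)
      rw [h1, h2] at hLk'
      exact sub_left_injective hLk'
    have hkk : k' = k := hinj k' hk'n k hkn hxeq
    -- then m = n * q with q ≥ 1, contradicting m < n
    rw [hkk] at hqe
    set q := (k + m) / n with hqdef
    have hmq : m = n * q := by omega
    have hq1 : 1 ≤ q := by
      rcases Nat.eq_zero_or_pos q with h0 | h0
      · exfalso; rw [h0, Nat.mul_zero] at hmq; omega
      · exact h0
    have : n ≤ n * q := Nat.le_mul_of_pos_right n hq1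
    omega
end
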